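/- arXiv:2111.10150 — 6 statements merged into one kernel-verified Lean document; each statement's English description precedes it below -/
import Mathlib

section
/- Let F ∈ 𝓕_dist and let μ be the (unique) compactly supported probability measure on ℝ with moments s_n(F); assume μ is not a Dirac measure δ_u. Then for every t < 0 the free power F^{⊞t} does not belong to 𝓕_dist: there is no compactly supported probability measure on ℝ whose n-th moment equals s_n(F^{⊞t}) for all n. -/
set_option maxHeartbeats 1000000


open Polynomial MeasureTheory

noncomputable section

/-- The rational function `F(w) = w·P(w)/Q(w)` as a real function. -/
def Ffun (P Q : Polynomial ℝ) (w : ℝ) : ℝ := w * P.eval w / Q.eval w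

/-- The rational function `F(w) = w·P(w)/Q(w)` as a complex function. -/
def FfunC (P Q : Polynomial ℝ) (w : ℂ) : ℂ :=
  w * Polynomial.aeval w P / Polynomial.aeval w Q

/-- Membership of the pair `(P,Q)` in the class `𝓕`: `P, Q` coprime with `P(0)=Q(0)=1`. -/
def InF (P Q : Polynomial ℝ) : Prop :=
  IsCoprime P Q ∧ P.eval 0 = 1 ∧ Q.eval 0 = 1

/-- The characteristic polynomial `χ_F = (P + X·P')·Q − X·P·Q'`. -/
def charPoly (P Q : Polynomial ℝ) : Polynomial ℝ :=
  (P + X * derivative P) * Q - X * P * derivative Q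

/-- A real polynomial is real-rooted if every complex root is real. -/
def RealRooted (p : Polynomial ℝ) : Prop :=
  ∀ z : ℂ, Polynomial.aeval z p = 0 → z.im = 0

/-- The set `N(F)`: those `z₀ ∈ ℂ` for which `w·P(w) − z₀·Q(w)` has a multiple complex root. -/
def NSet (P Q : Polynomial ℝ) : Set ℂ :=
  {z₀ : ℂ | ∃ w₀ : ℂ,
    (X * Polynomial.map (algebraMap ℝ ℂ) P
      - Polynomial.C z₀ * Polynomial.map (algebraMap ℝ ℂ) Q).eval w₀ = 0 ∧
    (derivative (X * Polynomial.map (algebraMap ℝ ℂ) P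
      - Polynomial.C z₀ * Polynomial.map (algebraMap ℝ ℂ) Q)).eval w₀ = 0}

/-- The upshifted moment generating function `D_μ(z) = ∫ z/(1−xz) dμ(x)`. -/
def Dmeas (μ : Measure ℝ) (z : ℝ) : ℝ := ∫ x, z / (1 - x * z) ∂μ

/-- `μ` is a compactly supported probability measure on `ℝ`. -/
def IsCSProb (μ : Measure ℝ) : Prop :=
  IsProbabilityMeasure μ ∧ ∃ R : ℝ, ∀ᵐ x ∂μ, |x| ≤ R

/-- `f ∈ 𝓕_dist`: there is a compactly supported probability measure `μ` whose upshifted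
moment generating function `D_μ` is a local right inverse of `f` at `0`; equivalently the
moments of `f` form the moment sequence of `μ`. -/
def FDistFun (f : ℝ → ℝ) : Prop :=
  ∃ μ : Measure ℝ, IsCSProb μ ∧ ∃ ε : ℝ, 0 < ε ∧ ∀ z : ℝ, |z| < ε → f (Dmeas μ z) = z

/-- `F = wP/Q ∈ 𝓕_dist`. -/
def FDist (P Q : Polynomial ℝ) : Prop := FDistFun (Ffun P Q)

/-- The characteristic polynomial `χ_t` of the free power `F^{⊞t}`, computed from the pair
`(P, P + t(Q−P))`. -/
def chiT (P Q : Polynomial ℝ) (t : ℝ) : Polynomial ℝ :=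
  charPoly P (P + Polynomial.C t * (Q - P))

/-- 4-term expansion at 0 with O(z^4) error. -/
def HE (f : ℝ → ℝ) (a₀ a₁ a₂ a₃ : ℝ) : Prop :=
  ∃ C δ : ℝ, 0 < δ ∧ ∀ z : ℝ, |z| < δ →
    |f z - (a₀ + a₁*z + a₂*z^2 + a₃*z^3)| ≤ C * |z|^4

lemma abs_cubic_le (c₀ c₁ c₂ c₃ z : ℝ) (hz : |z| ≤ 1) :
    |c₀ + c₁*z + c₂*z^2 + c₃*z^3| ≤ |c₀|+|c₁|+|c₂|+|c₃| := by
  have hzn : (0:ℝ) ≤ |z| := abs_nonneg z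
  have h2 : |z|^2 ≤ 1 := pow_le_one₀ hzn hz
  have h3 : |z|^3 ≤ 1 := pow_le_one₀ hzn hz
  have t1 := abs_add_le (c₀ + c₁*z + c₂*z^2) (c₃*z^3)
  have t2 := abs_add_le (c₀ + c₁*z) (c₂*z^2)
  have t3 := abs_add_le c₀ (c₁*z)
  rw [abs_mul, abs_pow] at t1
  rw [abs_mul, abs_pow] at t2
  rw [abs_mul] at t3
  nlinarith [abs_nonneg c₁, abs_nonneg c₂, abs_nonneg c₃, mul_le_of_le_one_right (abs_nonneg c₁) hz,
    mul_le_of_le_one_right (abs_nonneg c₂) h2, mul_le_of_le_one_right (abs_nonneg c₃) h3]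

lemma HE.const (c : ℝ) : HE (fun _ => c) c 0 0 0 :=
  ⟨0, 1, one_pos, fun z _ => by simp⟩

lemma HE.id' : HE (fun z => z) 0 1 0 0 :=
  ⟨0, 1, one_pos, fun z _ => by simp⟩

lemma HE.nonneg_C {f a₀ a₁ a₂ a₃} (h : HE f a₀ a₁ a₂ a₃) :
    ∃ C δ : ℝ, 0 ≤ C ∧ 0 < δ ∧ ∀ z : ℝ, |z| < δ →
      |f z - (a₀ + a₁*z + a₂*z^2 + a₃*z^3)| ≤ C * |z|^4 := by
  obtain ⟨C, δ, hδ, h⟩ := h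
  refine ⟨max C 0, δ, le_max_right _ _, hδ, fun z hz => (h z hz).trans ?_⟩
  have : (0:ℝ) ≤ |z|^4 := by positivity
  nlinarith [le_max_left C 0]

lemma HE.add {f g a₀ a₁ a₂ a₃ b₀ b₁ b₂ b₃} (hf : HE f a₀ a₁ a₂ a₃) (hg : HE g b₀ b₁ b₂ b₃) :
    HE (fun z => f z + g z) (a₀+b₀) (a₁+b₁) (a₂+b₂) (a₃+b₃) := by
  obtain ⟨C, δ, hδ, hf⟩ := hf; obtain ⟨C', δ', hδ', hg⟩ := hg
  refine ⟨C + C', min δ δ', lt_min hδ hδ', fun z hz => ?_⟩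
  have h1 := hf z (lt_of_lt_of_le hz (min_le_left _ _))
  have h2 := hg z (lt_of_lt_of_le hz (min_le_right _ _))
  have e : f z + g z - ((a₀+b₀) + (a₁+b₁)*z + (a₂+b₂)*z^2 + (a₃+b₃)*z^3)
      = (f z - (a₀ + a₁*z + a₂*z^2 + a₃*z^3)) + (g z - (b₀ + b₁*z + b₂*z^2 + b₃*z^3)) := by ring
  rw [e]
  have := abs_add_le (f z - (a₀ + a₁*z + a₂*z^2 + a₃*z^3)) (g z - (b₀ + b₁*z + b₂*z^2 + b₃*z^3))
  nlinarith [this]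

lemma HE.smul {f a₀ a₁ a₂ a₃} (c : ℝ) (hf : HE f a₀ a₁ a₂ a₃) :
    HE (fun z => c * f z) (c*a₀) (c*a₁) (c*a₂) (c*a₃) := by
  obtain ⟨C, δ, hδ, hf⟩ := hf
  refine ⟨|c| * C, δ, hδ, fun z hz => ?_⟩
  have h1 := hf z hz
  have e : c * f z - (c*a₀ + c*a₁*z + c*a₂*z^2 + c*a₃*z^3)
      = c * (f z - (a₀ + a₁*z + a₂*z^2 + a₃*z^3)) := by ring
  rw [e, abs_mul, mul_assoc]
  exact mul_le_mul_of_nonneg_left h1 (abs_nonneg c)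

lemma HE.sub {f g a₀ a₁ a₂ a₃ b₀ b₁ b₂ b₃} (hf : HE f a₀ a₁ a₂ a₃) (hg : HE g b₀ b₁ b₂ b₃) :
    HE (fun z => f z - g z) (a₀-b₀) (a₁-b₁) (a₂-b₂) (a₃-b₃) := by
  have h := hf.add (hg.smul (-1))
  simp only [neg_one_mul] at h
  simpa only [sub_eq_add_neg] using h

lemma HE.mul {f g a₀ a₁ a₂ a₃ b₀ b₁ b₂ b₃} (hf : HE f a₀ a₁ a₂ a₃) (hg : HE g b₀ b₁ b₂ b₃) :
    HE (fun z => f z * g z) (a₀*b₀) (a₀*b₁+a₁*b₀) (a₀*b₂+a₁*b₁+a₂*b₀)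
      (a₀*b₃+a₁*b₂+a₂*b₁+a₃*b₀) := by
  obtain ⟨C, δ, hC, hδ, hf⟩ := hf.nonneg_C
  obtain ⟨C', δ', hC', hδ', hg⟩ := hg.nonneg_C
  set Sa := |a₀|+|a₁|+|a₂|+|a₃| with hSa
  set Sb := |b₀|+|b₁|+|b₂|+|b₃| with hSb
  set Sr := |a₁*b₃+a₂*b₂+a₃*b₁| + |a₂*b₃+a₃*b₂| + |a₃*b₃| + |0| with hSr
  refine ⟨Sr + Sa * C' + C * (Sb + C'), min (min δ δ') 1, by positivity, fun z hz => ?_⟩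
  have hz1 : |z| < 1 := lt_of_lt_of_le hz (min_le_right _ _)
  have hzδ : |z| < δ := lt_of_lt_of_le hz ((min_le_left _ _).trans (min_le_left _ _))
  have hzδ' : |z| < δ' := lt_of_lt_of_le hz ((min_le_left _ _).trans (min_le_right _ _))
  have h1 := hf z hzδ
  have h2 := hg z hzδ'
  set A := a₀ + a₁*z + a₂*z^2 + a₃*z^3 with hA
  set B := b₀ + b₁*z + b₂*z^2 + b₃*z^3 with hB
  have hzn : (0:ℝ) ≤ |z| := abs_nonneg z
  have hz4 : (0:ℝ) ≤ |z|^4 := by positivity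
  have hz41 : |z|^4 ≤ 1 := pow_le_one₀ hzn hz1.le
  have hAbd : |A| ≤ Sa := by rw [hA, hSa]; exact abs_cubic_le _ _ _ _ _ hz1.le
  have hBbd : |B| ≤ Sb := by rw [hB, hSb]; exact abs_cubic_le _ _ _ _ _ hz1.le
  have hgbd : |g z| ≤ Sb + C' := by
    have t : |g z| ≤ |g z - B| + |B| := by
      have := abs_add_le (g z - B) B; simpa using this
    nlinarith
  have key : f z * g z - (a₀*b₀ + (a₀*b₁+a₁*b₀)*z + (a₀*b₂+a₁*b₁+a₂*b₀)*z^2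
      + (a₀*b₃+a₁*b₂+a₂*b₁+a₃*b₀)*z^3)
      = z^4 * ((a₁*b₃+a₂*b₂+a₃*b₁) + (a₂*b₃+a₃*b₂)*z + (a₃*b₃)*z^2 + 0*z^3)
        + (A * (g z - B) + (f z - A) * g z) := by
    rw [hA, hB]; ring
  rw [key]
  have e1 : |z^4 * ((a₁*b₃+a₂*b₂+a₃*b₁) + (a₂*b₃+a₃*b₂)*z + (a₃*b₃)*z^2 + 0*z^3)| ≤ Sr * |z|^4 := by
    rw [abs_mul, abs_pow, hSr]
    have := abs_cubic_le (a₁*b₃+a₂*b₂+a₃*b₁) (a₂*b₃+a₃*b₂) (a₃*b₃) 0 z hz1.le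
    nlinarith [abs_nonneg ((a₁*b₃+a₂*b₂+a₃*b₁) + (a₂*b₃+a₃*b₂)*z + (a₃*b₃)*z^2 + 0*z^3)]
  have e2 : |A * (g z - B)| ≤ Sa * (C' * |z|^4) := by
    rw [abs_mul]
    exact mul_le_mul hAbd h2 (abs_nonneg _) (le_trans (abs_nonneg A) hAbd)
  have e3 : |(f z - A) * g z| ≤ C * |z|^4 * (Sb + C') := by
    rw [abs_mul]
    exact mul_le_mul h1 hgbd (abs_nonneg _) (by positivity)
  have t1 := abs_add_le (z^4 * ((a₁*b₃+a₂*b₂+a₃*b₁) + (a₂*b₃+a₃*b₂)*z + (a₃*b₃)*z^2 + 0*z^3))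
    (A * (g z - B) + (f z - A) * g z)
  have t2 := abs_add_le (A * (g z - B)) ((f z - A) * g z)
  nlinarith [t1, t2]

lemma const_eq_zero {c K δ : ℝ} (hδ : 0 < δ) (h : ∀ z : ℝ, 0 < z → z < δ → |c| ≤ K * z) :
    c = 0 := by
  by_contra hc
  have hc' : 0 < |c| := abs_pos.mpr hc
  have hK : 0 < K := by
    have := h (δ/2) (by linarith) (by linarith)
    nlinarith
  set z₀ := min (δ/2) (|c|/(2*K)) with hz₀
  have hz₀pos : 0 < z₀ := lt_min (by linarith) (by positivity)
  have hz₀δ : z₀ < δ := lt_of_le_of_lt (min_le_left _ _) (by linarith)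
  have h1 := h z₀ hz₀pos hz₀δ
  have h2 : z₀ ≤ |c|/(2*K) := min_le_right _ _
  have e : K * (|c|/(2*K)) = |c|/2 := by field_simp
  nlinarith [mul_le_mul_of_nonneg_left h2 hK.le]

lemma peel {a C δ : ℝ} {g : ℝ → ℝ} {n : ℕ} {M : ℝ} (hδ : 0 < δ) (hδ1 : δ ≤ 1)
    (hg : ∀ z : ℝ, 0 < z → z < δ → |g z| ≤ M)
    (h : ∀ z : ℝ, 0 < z → z < δ → |a + z * g z| ≤ C * z^(n+1)) :
    a = 0 ∧ ∀ z : ℝ, 0 < z → z < δ → |g z| ≤ C * z^n := by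
  have hC : 0 ≤ C := by
    have h1 := h (δ/2) (by linarith) (by linarith)
    have : (0:ℝ) < (δ/2)^(n+1) := by positivity
    nlinarith [abs_nonneg (a + (δ/2) * g (δ/2))]
  have ha : a = 0 := by
    apply const_eq_zero hδ (K := C + M)
    intro z hz hzδ
    have h1 := h z hz hzδ
    have h2 := hg z hz hzδ
    have hz1 : z ≤ 1 := le_of_lt (lt_of_lt_of_le hzδ hδ1)
    have hzn1 : z^(n+1) ≤ z := by
      calc z^(n+1) ≤ z^1 := pow_le_pow_of_le_one (le_of_lt hz) hz1 (by omega)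
        _ = z := pow_one z
    have t : |a| ≤ |a + z * g z| + |z * g z| := by
      have := abs_add_le (a + z * g z) (-(z * g z)); simpa using this
    rw [abs_mul, abs_of_pos hz] at t
    have : |a| ≤ C * z^(n+1) + z * M := by nlinarith
    nlinarith
  refine ⟨ha, fun z hz hzδ => ?_⟩
  have h1 := h z hz hzδ
  rw [ha, zero_add, abs_mul, abs_of_pos hz] at h1
  have : z * |g z| ≤ C * (z^n * z) := by
    calc z * |g z| ≤ C * z^(n+1) := h1
      _ = C * (z^n * z) := by ring
  have := le_of_mul_le_mul_right (by linarith [this] : |g z| * z ≤ (C * z^n) * z) hz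
  linarith

lemma cubic_zero {c₀ c₁ c₂ c₃ C δ : ℝ} (hδ : 0 < δ)
    (h : ∀ z : ℝ, |z| < δ → |c₀ + c₁*z + c₂*z^2 + c₃*z^3| ≤ C * |z|^4) :
    c₀ = 0 ∧ c₁ = 0 ∧ c₂ = 0 ∧ c₃ = 0 := by
  set δ' := min δ 1 with hδ'
  have hδ'pos : 0 < δ' := lt_min hδ one_pos
  have hδ'1 : δ' ≤ 1 := min_le_right _ _
  have key : ∀ z : ℝ, 0 < z → z < δ' → |c₀ + z * (c₁ + z * (c₂ + z * c₃))| ≤ C * z^4 := by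
    intro z hz hzδ
    have habs : |z| < δ := by rw [abs_of_pos hz]; exact lt_of_lt_of_le hzδ (min_le_left _ _)
    have h2 := h z habs
    rw [abs_of_pos hz] at h2
    have e : c₀ + z * (c₁ + z * (c₂ + z * c₃)) = c₀ + c₁*z + c₂*z^2 + c₃*z^3 := by ring
    rw [e]; exact h2
  have bd1 : ∀ z : ℝ, 0 < z → z < δ' → |c₁ + z * (c₂ + z * c₃)| ≤ |c₁| + (|c₂| + |c₃|) := by
    intro z hz hzδ
    have hz1 : z ≤ 1 := le_of_lt (lt_of_lt_of_le hzδ hδ'1)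
    have t1 := abs_add_le c₁ (z * (c₂ + z * c₃))
    have t2 := abs_add_le c₂ (z * c₃)
    rw [abs_mul, abs_of_pos hz] at t1 t2
    nlinarith [abs_nonneg (c₂ + z*c₃), abs_nonneg c₃, abs_nonneg c₂]
  obtain ⟨h0, key1⟩ := peel (n := 3) hδ'pos hδ'1 bd1 key
  have bd2 : ∀ z : ℝ, 0 < z → z < δ' → |c₂ + z * c₃| ≤ |c₂| + |c₃| := by
    intro z hz hzδ
    have hz1 : z ≤ 1 := le_of_lt (lt_of_lt_of_le hzδ hδ'1)
    have t2 := abs_add_le c₂ (z * c₃)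
    rw [abs_mul, abs_of_pos hz] at t2
    nlinarith [abs_nonneg c₃]
  obtain ⟨h1, key2⟩ := peel (n := 2) hδ'pos hδ'1 bd2 key1
  have bd3 : ∀ z : ℝ, 0 < z → z < δ' → |c₃| ≤ |c₃| := fun _ _ _ => le_rfl
  obtain ⟨h2, key3⟩ := peel (n := 1) hδ'pos hδ'1 bd3 key2
  have h3 : c₃ = 0 := by
    apply const_eq_zero hδ'pos (K := C)
    intro z hz hzδ
    have := key3 z hz hzδ
    simpa [pow_one] using this
  exact ⟨h0, h1, h2, h3⟩

lemma HE.coeff_congr {f : ℝ → ℝ} {a₀ a₁ a₂ a₃ b₀ b₁ b₂ b₃ : ℝ} (h : HE f a₀ a₁ a₂ a₃)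
    (e₀ : b₀ = a₀) (e₁ : b₁ = a₁) (e₂ : b₂ = a₂) (e₃ : b₃ = a₃) : HE f b₀ b₁ b₂ b₃ := by
  subst e₀ e₁ e₂ e₃; exact h

lemma HE.congr_fun {f g : ℝ → ℝ} {a₀ a₁ a₂ a₃ δ₀ : ℝ} (h : HE f a₀ a₁ a₂ a₃) (hδ₀ : 0 < δ₀)
    (e : ∀ z : ℝ, |z| < δ₀ → f z = g z) : HE g a₀ a₁ a₂ a₃ := by
  obtain ⟨C, δ, hδ, h⟩ := h
  exact ⟨C, min δ δ₀, lt_min hδ hδ₀, fun z hz => by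
    rw [← e z (lt_of_lt_of_le hz (min_le_right _ _))]
    exact h z (lt_of_lt_of_le hz (min_le_left _ _))⟩

lemma HE.add_err {g T : ℝ → ℝ} {a₀ a₁ a₂ a₃ : ℝ} (h : HE g a₀ a₁ a₂ a₃)
    (hT : ∃ C δ : ℝ, 0 < δ ∧ ∀ z : ℝ, |z| < δ → |T z| ≤ C * |z|^4) :
    HE (fun z => g z + T z) a₀ a₁ a₂ a₃ := by
  obtain ⟨C, δ, hδ, h⟩ := h
  obtain ⟨C', δ', hδ', hT⟩ := hT
  refine ⟨C + C', min δ δ', lt_min hδ hδ', fun z hz => ?_⟩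
  have h1 := h z (lt_of_lt_of_le hz (min_le_left _ _))
  have h2 := hT z (lt_of_lt_of_le hz (min_le_right _ _))
  have e : g z + T z - (a₀ + a₁*z + a₂*z^2 + a₃*z^3)
      = (g z - (a₀ + a₁*z + a₂*z^2 + a₃*z^3)) + T z := by ring
  rw [e]
  have := abs_add_le (g z - (a₀ + a₁*z + a₂*z^2 + a₃*z^3)) (T z)
  nlinarith

lemma HE.polyEval (p : Polynomial ℝ) {f : ℝ → ℝ} {m₁ m₂ : ℝ}
    (hf : HE f 0 1 m₁ m₂) {δf : ℝ} (hδf : 0 < δf) (hb : ∀ z : ℝ, |z| < δf → |f z| ≤ 2*|z|) :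
    HE (fun z => p.eval (f z)) (p.coeff 0) (p.coeff 1) (p.coeff 1 * m₁ + p.coeff 2)
      (p.coeff 1 * m₂ + 2 * p.coeff 2 * m₁ + p.coeff 3) := by
  have hf2 : HE (fun z => f z * f z) 0 0 1 (m₁ + m₁) :=
    (hf.mul hf).coeff_congr (by ring) (by ring) (by ring) (by ring)
  have hf3 : HE (fun z => f z * f z * f z) 0 0 0 1 :=
    (hf2.mul hf).coeff_congr (by ring) (by ring) (by ring) (by ring)
  set N := max (p.natDegree + 1) 4 with hN
  have hdeg : p.natDegree < N := lt_of_lt_of_le (Nat.lt_succ_self _) (le_max_left _ _)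
  have h4N : 4 ≤ N := le_max_right _ _
  -- the cubic part
  have hcub : HE (fun z => p.coeff 0 + p.coeff 1 * f z + p.coeff 2 * (f z * f z)
      + p.coeff 3 * (f z * f z * f z)) (p.coeff 0) (p.coeff 1)
      (p.coeff 1 * m₁ + p.coeff 2) (p.coeff 1 * m₂ + 2 * p.coeff 2 * m₁ + p.coeff 3) := by
    have h := ((((HE.const (p.coeff 0)).add (hf.smul (p.coeff 1))).add
      (hf2.smul (p.coeff 2))).add (hf3.smul (p.coeff 3)))
    exact h.coeff_congr (by ring) (by ring) (by ring) (by ring)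
  -- tail
  set K := (∑ i ∈ Finset.Ico 4 N, |p.coeff i|) * 16 with hK
  have hTb : ∀ z : ℝ, |z| < min δf (1/2) →
      |∑ i ∈ Finset.Ico 4 N, p.coeff i * f z ^ i| ≤ K * |z|^4 := by
    intro z hz
    have hz1 : |z| < δf := lt_of_lt_of_le hz (min_le_left _ _)
    have hz2 : |z| < 1/2 := lt_of_lt_of_le hz (min_le_right _ _)
    have hfb := hb z hz1
    have hf1 : |f z| ≤ 1 := by linarith [abs_nonneg z]
    have hstep : ∀ i ∈ Finset.Ico 4 N, |p.coeff i * f z ^ i| ≤ |p.coeff i| * (16 * |z|^4) := by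
      intro i hi
      obtain ⟨h4i, -⟩ := Finset.mem_Ico.mp hi
      rw [abs_mul, abs_pow]
      have e1 : |f z|^i ≤ |f z|^4 := pow_le_pow_of_le_one (abs_nonneg _) hf1 h4i
      have e2 : |f z|^4 ≤ (2*|z|)^4 := pow_le_pow_left₀ (abs_nonneg _) hfb 4
      have e3 : (2*|z|:ℝ)^4 = 16 * |z|^4 := by ring
      have := e1.trans (e2.trans_eq e3)
      exact mul_le_mul_of_nonneg_left this (abs_nonneg _)
    calc |∑ i ∈ Finset.Ico 4 N, p.coeff i * f z ^ i|
        ≤ ∑ i ∈ Finset.Ico 4 N, |p.coeff i * f z ^ i| := Finset.abs_sum_le_sum_abs _ _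
      _ ≤ ∑ i ∈ Finset.Ico 4 N, |p.coeff i| * (16 * |z|^4) := Finset.sum_le_sum hstep
      _ = K * |z|^4 := by rw [hK, ← Finset.sum_mul]; ring
  have hdecomp : ∀ z : ℝ, p.eval (f z) = (p.coeff 0 + p.coeff 1 * f z
      + p.coeff 2 * (f z * f z) + p.coeff 3 * (f z * f z * f z))
      + ∑ i ∈ Finset.Ico 4 N, p.coeff i * f z ^ i := by
    intro z
    rw [Polynomial.eval_eq_sum_range' hdeg]
    rw [Finset.range_eq_Ico, ← Finset.sum_Ico_consecutive _ (Nat.zero_le 4) h4N]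
    have : ∑ i ∈ Finset.Ico 0 4, p.coeff i * f z ^ i
        = p.coeff 0 + p.coeff 1 * f z + p.coeff 2 * (f z * f z)
          + p.coeff 3 * (f z * f z * f z) := by
      rw [← Finset.range_eq_Ico]
      rw [Finset.sum_range_succ, Finset.sum_range_succ, Finset.sum_range_succ,
        Finset.sum_range_succ, Finset.sum_range_zero]
      ring
    rw [this]
  have := hcub.add_err (T := fun z => ∑ i ∈ Finset.Ico 4 N, p.coeff i * f z ^ i)
    ⟨K, min δf (1/2), lt_min hδf (by norm_num), hTb⟩
  exact this.congr_fun one_pos (fun z _ => (hdecomp z).symm)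

lemma integrable_of_bound (μ : Measure ℝ) [IsFiniteMeasure μ] (f : ℝ → ℝ)
    (hmeas : AEStronglyMeasurable f μ) (C : ℝ) (h : ∀ᵐ x ∂μ, |f x| ≤ C) : Integrable f μ :=
  Integrable.mono' (integrable_const C) hmeas (by simpa [Real.norm_eq_abs] using h)

lemma abs_div_le (a d : ℝ) (hd : 1/2 ≤ |d|) : |a/d| ≤ 2*|a| := by
  rw [abs_div, div_le_iff₀ (by linarith)]
  nlinarith [abs_nonneg a]

/-- All the good a.e. properties inside the radius 1/(2R). -/
lemma csprob_setup (μ : Measure ℝ) (hμ : IsCSProb μ) :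
    ∃ R : ℝ, 1 ≤ R ∧ (∀ᵐ x ∂μ, |x| ≤ R) := by
  obtain ⟨-, R₀, hR₀⟩ := hμ
  exact ⟨max R₀ 1, le_max_right _ _, hR₀.mono fun x hx => hx.trans (le_max_left _ _)⟩

lemma Dmeas_bound (μ : Measure ℝ) (hμ : IsCSProb μ) :
    ∃ δ : ℝ, 0 < δ ∧ ∀ z : ℝ, |z| < δ → |Dmeas μ z| ≤ 2 * |z| := by
  haveI := hμ.1
  obtain ⟨R, hR1, hR⟩ := csprob_setup μ hμ
  have hRpos : (0:ℝ) < R := by linarith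
  refine ⟨1/(2*R), by positivity, fun z hz => ?_⟩
  have key : ∀ᵐ x ∂μ, ‖z / (1 - x*z)‖ ≤ 2*|z| := by
    filter_upwards [hR] with x hx
    have h1 : |x*z| ≤ 1/2 := by
      rw [abs_mul]
      calc |x| * |z| ≤ R*|z| := mul_le_mul_of_nonneg_right hx (abs_nonneg z)
        _ ≤ R*(1/(2*R)) := le_of_lt (mul_lt_mul_of_pos_left (by simpa using hz) hRpos)
        _ = 1/2 := by field_simp
    have h2 : 1/2 ≤ |1 - x*z| := by
      have h4 := abs_sub_abs_le_abs_sub 1 (x*z)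
      rw [abs_one] at h4
      linarith
    rw [Real.norm_eq_abs]
    exact abs_div_le z _ h2
  have := norm_integral_le_of_norm_le_const key
  simpa [Dmeas, Real.norm_eq_abs] using this

lemma Dmeas_HE (μ : Measure ℝ) (hμ : IsCSProb μ) :
    HE (Dmeas μ) 0 1 (∫ x, x ∂μ) (∫ x, x^2 ∂μ) := by
  haveI := hμ.1
  obtain ⟨R, hR1, hR⟩ := csprob_setup μ hμ
  have hRpos : (0:ℝ) < R := by linarith
  refine ⟨2*R^3, 1/(2*R), by positivity, fun z hz => ?_⟩
  -- a.e. denominator bound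
  have hden : ∀ᵐ x ∂μ, 1/2 ≤ |1 - x*z| := by
    filter_upwards [hR] with x hx
    have h1 : |x*z| ≤ 1/2 := by
      rw [abs_mul]
      calc |x| * |z| ≤ R*|z| := mul_le_mul_of_nonneg_right hx (abs_nonneg z)
        _ ≤ R*(1/(2*R)) := le_of_lt (mul_lt_mul_of_pos_left (by simpa using hz) hRpos)
        _ = 1/2 := by field_simp
    have h4 := abs_sub_abs_le_abs_sub 1 (x*z)
    rw [abs_one] at h4
    linarith
  -- integrability
  have m1 : AEStronglyMeasurable (fun x : ℝ => z / (1 - x*z)) μ :=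
    (by fun_prop : Measurable (fun x : ℝ => z / (1 - x*z))).aestronglyMeasurable
  have i1 : Integrable (fun x : ℝ => z / (1 - x*z)) μ := by
    apply integrable_of_bound μ _ m1 (2*|z|)
    filter_upwards [hden] with x hx
    exact abs_div_le z _ hx
  have i2 : Integrable (fun x : ℝ => x * z^2) μ := by
    apply integrable_of_bound μ _ ((by fun_prop : Measurable (fun x : ℝ => x * z^2)).aestronglyMeasurable) (R * z^2)
    filter_upwards [hR] with x hx
    rw [abs_mul, abs_pow, sq_abs]
    exact mul_le_mul_of_nonneg_right hx (by positivity)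
  have i3 : Integrable (fun x : ℝ => x^2 * z^3) μ := by
    apply integrable_of_bound μ _ ((by fun_prop : Measurable (fun x : ℝ => x^2 * z^3)).aestronglyMeasurable) (R^2 * |z|^3)
    filter_upwards [hR] with x hx
    rw [abs_mul, abs_pow, abs_pow]
    exact mul_le_mul_of_nonneg_right (by nlinarith [abs_nonneg x]) (by positivity)
  have ix : Integrable (fun x : ℝ => x) μ := by
    apply integrable_of_bound μ _ ((by fun_prop : Measurable (fun x : ℝ => x)).aestronglyMeasurable) R
    exact hR
  have ix2 : Integrable (fun x : ℝ => x^2) μ := by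
    apply integrable_of_bound μ _ ((by fun_prop : Measurable (fun x : ℝ => x^2)).aestronglyMeasurable) (R^2)
    filter_upwards [hR] with x hx
    rw [abs_pow]
    nlinarith [abs_nonneg x]
  have ic : Integrable (fun _ : ℝ => z) μ := integrable_const z
  -- rewrite the cubic part as integrals
  have e0 : z = ∫ _, z ∂μ := by simp
  have e1 : (∫ x, x ∂μ) * z^2 = ∫ x, x * z^2 ∂μ := by
    rw [integral_mul_const]
  have e2 : (∫ x, x^2 ∂μ) * z^3 = ∫ x, x^2 * z^3 ∂μ := by
    rw [integral_mul_const]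
  have ed : Dmeas μ z - (0 + 1*z + (∫ x, x ∂μ)*z^2 + (∫ x, x^2 ∂μ)*z^3)
      = ∫ x, (z / (1 - x*z) - z - x*z^2 - x^2*z^3) ∂μ := by
    have h12 : Integrable (fun x : ℝ => z / (1 - x*z) - z) μ := i1.sub ic
    have h123 : Integrable (fun x : ℝ => z / (1 - x*z) - z - x*z^2) μ := h12.sub i2
    rw [integral_sub h123 i3, integral_sub h12 i2, integral_sub i1 ic]
    rw [← e1, ← e2, ← e0]
    simp only [Dmeas]
    ring
  rw [ed]
  -- pointwise identity and bound
  have ept : ∀ᵐ x ∂μ, z / (1 - x*z) - z - x*z^2 - x^2*z^3 = x^3*z^4/(1 - x*z) := by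
    filter_upwards [hden] with x hx
    have hne : 1 - x*z ≠ 0 := by
      intro h; rw [h] at hx; simp at hx; linarith
    rw [div_eq_mul_inv, div_eq_mul_inv]
    have hi := mul_inv_cancel₀ hne
    linear_combination (z*(1 + x*z + x^2*z^2)) * hi
  rw [integral_congr_ae ept]
  have key : ∀ᵐ x ∂μ, ‖x^3*z^4/(1 - x*z)‖ ≤ 2*R^3 * |z|^4 := by
    filter_upwards [hden, hR] with x hx hxR
    rw [Real.norm_eq_abs]
    calc |x^3*z^4/(1 - x*z)| ≤ 2*|x^3*z^4| := abs_div_le _ _ hx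
      _ = 2*(|x|^3*|z|^4) := by rw [abs_mul, abs_pow, abs_pow]
      _ ≤ 2*(R^3*|z|^4) := by
          have : |x|^3 ≤ R^3 := pow_le_pow_left₀ (abs_nonneg x) hxR 3
          nlinarith [pow_nonneg (abs_nonneg z) 4]
      _ = 2*R^3*|z|^4 := by ring
  have := norm_integral_le_of_norm_le_const key
  simpa using this

lemma HE.eq_zero {f : ℝ → ℝ} {a₀ a₁ a₂ a₃ δ₀ : ℝ} (h : HE f a₀ a₁ a₂ a₃) (hδ₀ : 0 < δ₀)
    (hf0 : ∀ z : ℝ, |z| < δ₀ → f z = 0) : a₀ = 0 ∧ a₁ = 0 ∧ a₂ = 0 ∧ a₃ = 0 := by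
  obtain ⟨C, δ, hδ, h⟩ := h
  apply cubic_zero (δ := min δ δ₀) (C := C) (lt_min hδ hδ₀)
  intro z hz
  have h1 := h z (lt_of_lt_of_le hz (min_le_left _ _))
  rw [hf0 z (lt_of_lt_of_le hz (min_le_right _ _))] at h1
  calc |a₀ + a₁*z + a₂*z^2 + a₃*z^3| = |0 - (a₀ + a₁*z + a₂*z^2 + a₃*z^3)| := by
        rw [zero_sub, abs_neg]
    _ ≤ C * |z|^4 := h1

/-- The moment extraction lemma. -/
lemma momA (P Q : Polynomial ℝ) (hP : P.eval 0 = 1) (hQ : Q.eval 0 = 1)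
    (μ : Measure ℝ) (hμ : IsCSProb μ)
    (hinv : ∃ ε : ℝ, 0 < ε ∧ ∀ z : ℝ, |z| < ε → Ffun P Q (Dmeas μ z) = z) :
    (∫ x, x ∂μ) = Q.coeff 1 - P.coeff 1 ∧
    (∫ x, x^2 ∂μ) - (∫ x, x ∂μ)^2
      = P.coeff 1 * (P.coeff 1 - Q.coeff 1) + Q.coeff 2 - P.coeff 2 := by
  obtain ⟨ε, hε, hinv⟩ := hinv
  obtain ⟨δb, hδb, hDb⟩ := Dmeas_bound μ hμ
  have hD := Dmeas_HE μ hμ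
  set m₁ := ∫ x, x ∂μ
  set m₂ := ∫ x, x^2 ∂μ
  have hp0 : P.coeff 0 = 1 := by rwa [Polynomial.coeff_zero_eq_eval_zero]
  have hq0 : Q.coeff 0 = 1 := by rwa [Polynomial.coeff_zero_eq_eval_zero]
  have hPe := HE.polyEval P hD hδb hDb
  have hQe := HE.polyEval Q hD hδb hDb
  have hLHS := (hD.mul hPe).sub (HE.id'.mul hQe)
  -- Q.eval nonzero near 0
  have hQc : ContinuousAt (fun w : ℝ => Q.eval w) 0 := (Polynomial.continuous Q).continuousAt
  have h12 : (0:ℝ) < 1/2 := by norm_num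
  obtain ⟨η, hη, hQn⟩ := Metric.continuousAt_iff.mp hQc (1/2) h12
  set δ₀ := min (min ε δb) (η/2) with hδ₀def
  have hδ₀ : 0 < δ₀ := lt_min (lt_min hε hδb) (by linarith)
  have hzero : ∀ z : ℝ, |z| < δ₀ →
      Dmeas μ z * P.eval (Dmeas μ z) - z * Q.eval (Dmeas μ z) = 0 := by
    intro z hz
    have hz1 : |z| < ε := lt_of_lt_of_le hz ((min_le_left _ _).trans (min_le_left _ _))
    have hz2 : |z| < δb := lt_of_lt_of_le hz ((min_le_left _ _).trans (min_le_right _ _))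
    have hz3 : |z| < η/2 := lt_of_lt_of_le hz (min_le_right _ _)
    have hDz : |Dmeas μ z| < η := by
      have := hDb z hz2
      linarith
    have hQnz : Q.eval (Dmeas μ z) ≠ 0 := by
      have := hQn (show dist (Dmeas μ z) 0 < η by simpa [Real.dist_eq] using hDz)
      rw [Real.dist_eq, hQ] at this
      intro hc
      rw [hc] at this
      simp at this
      linarith
    have := hinv z hz1
    unfold Ffun at this
    field_simp at this
    linarith [this]
  have hcoef := hLHS.eq_zero hδ₀ hzero
  obtain ⟨-, -, h2, h3⟩ := hcoef
  -- h2 : 0*(P.coeff 1 * m₁ + P.coeff 2)+1*(P.coeff 1)+m₁*(P.coeff 0) - (0*...+1*(Q.coeff 1)+0*(Q.coeff 0)) = 0 etc.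
  rw [hp0, hq0] at h2 h3
  constructor
  · linarith [h2]
  · have e1 : m₁ = Q.coeff 1 - P.coeff 1 := by linarith [h2]
    have e2 : m₂ = Q.coeff 1 * m₁ + Q.coeff 2 - 2 * P.coeff 1 * m₁ - P.coeff 2 := by
      linarith [h3]
    linear_combination e2 - (m₁ + P.coeff 1) * e1

lemma var_integral (μ : Measure ℝ) (hμ : IsCSProb μ) (m : ℝ) (hm : m = ∫ x, x ∂μ) :
    Integrable (fun x : ℝ => (x - m)^2) μ ∧
    (∫ x, (x - m)^2 ∂μ) = (∫ x, x^2 ∂μ) - (∫ x, x ∂μ)^2 := by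
  haveI := hμ.1
  obtain ⟨R, hR1, hR⟩ := csprob_setup μ hμ
  have isq : Integrable (fun x : ℝ => (x - m)^2) μ := by
    apply integrable_of_bound μ _ ((by fun_prop :
      Measurable (fun x : ℝ => (x - m)^2)).aestronglyMeasurable) ((R + |m|)^2)
    filter_upwards [hR] with x hx
    rw [abs_pow]
    have h1 : |x - m| ≤ R + |m| := (abs_sub _ _).trans (add_le_add hx le_rfl)
    have h2 : (0:ℝ) ≤ |x - m| := abs_nonneg _
    nlinarith
  have ix : Integrable (fun x : ℝ => x) μ := by
    apply integrable_of_bound μ _ ((by fun_prop :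
      Measurable (fun x : ℝ => x)).aestronglyMeasurable) R
    exact hR
  have ix2 : Integrable (fun x : ℝ => x^2) μ := by
    apply integrable_of_bound μ _ ((by fun_prop :
      Measurable (fun x : ℝ => x^2)).aestronglyMeasurable) (R^2)
    filter_upwards [hR] with x hx
    rw [abs_pow]
    nlinarith [abs_nonneg x]
  refine ⟨isq, ?_⟩
  have e : ∀ x : ℝ, (x - m)^2 = x^2 - 2*m*x + m^2 := fun x => by ring
  have e2 : (∫ x, (x - m)^2 ∂μ) = ∫ x, (x^2 - 2*m*x + m^2) ∂μ := by
    apply integral_congr_ae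
    filter_upwards with x
    exact e x
  rw [e2]
  have i2 : Integrable (fun x : ℝ => 2*m*x) μ := by
    have := ix.const_mul (2*m)
    simpa using this
  have i12 : Integrable (fun x : ℝ => x^2 - 2*m*x) μ := ix2.sub i2
  rw [integral_add i12 (integrable_const (m^2)), integral_sub ix2 i2,
    integral_const_mul, integral_const]
  simp [hm]
  ring

lemma var_nonneg (μ : Measure ℝ) (hμ : IsCSProb μ) :
    0 ≤ (∫ x, x^2 ∂μ) - (∫ x, x ∂μ)^2 := by
  obtain ⟨-, e⟩ := var_integral μ hμ (∫ x, x ∂μ) rfl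
  rw [← e]
  exact integral_nonneg fun x => sq_nonneg _

lemma var_zero_dirac (μ : Measure ℝ) (hμ : IsCSProb μ)
    (h : (∫ x, x^2 ∂μ) - (∫ x, x ∂μ)^2 = 0) :
    μ = Measure.dirac (∫ x, x ∂μ) := by
  haveI := hμ.1
  set m := ∫ x, x ∂μ with hm
  obtain ⟨isq, e⟩ := var_integral μ hμ m hm
  have hzero : (∫ x, (x - m)^2 ∂μ) = 0 := by rw [e, ← h]
  have hae : ∀ᵐ x ∂μ, (x - m)^2 = 0 := by
    have := (integral_eq_zero_iff_of_nonneg (fun x => sq_nonneg (x - m)) isq).mp hzero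
    filter_upwards [this] with x hx
    simpa using hx
  have haem : ∀ᵐ x ∂μ, x = m := by
    filter_upwards [hae] with x hx
    have := pow_eq_zero_iff (n := 2) (by norm_num) |>.mp hx
    linarith [this]
  have hnull : μ {x : ℝ | ¬ x = m} = 0 := by
    rw [← MeasureTheory.ae_iff]
    exact haem
  have hcompl : ({m} : Set ℝ)ᶜ = {x : ℝ | ¬ x = m} := by
    ext x; simp
  ext s hs
  have hsplit := measure_inter_add_diff (μ := μ) s (measurableSet_singleton m)
  have hdiff : μ (s \ {m}) = 0 := by
    apply measure_mono_null _ hnull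
    intro x hx
    simp only [Set.mem_diff, Set.mem_singleton_iff] at hx
    exact hx.2
  have hsm : μ s = μ (s ∩ {m}) := by
    rw [← hsplit, hdiff, add_zero]
  rw [Measure.dirac_apply' _ hs]
  by_cases hm_s : m ∈ s
  · have : s ∩ {m} = ({m} : Set ℝ) := by
      apply Set.inter_eq_self_of_subset_right
      simpa using hm_s
    rw [hsm, this]
    have h1 : μ ({m} : Set ℝ) + μ (({m} : Set ℝ)ᶜ) = 1 := by
      rw [measure_add_measure_compl (measurableSet_singleton m)]
      simp
    rw [hcompl, hnull, add_zero] at h1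
    rw [h1]
    simp [Set.indicator, hm_s]
  · have : s ∩ {m} = (∅ : Set ℝ) := by
      ext x; simp only [Set.mem_inter_iff, Set.mem_singleton_iff, Set.mem_empty_iff_false,
        iff_false, not_and]
      intro hxs hxm; exact hm_s (hxm ▸ hxs)
    rw [hsm, this]
    simp [Set.indicator, hm_s]


/-- if `F ∈ 𝓕_dist` with representing measure `μ` which is not a Dirac mass,
then for `t < 0` the free power `F^{⊞t}` is not in `𝓕_dist`. -/
theorem stmt5 (P Q : Polynomial ℝ) (hF : InF P Q) (t : ℝ) (ht : t < 0)
    (μ : Measure ℝ) (hμ : IsCSProb μ)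
    (hinv : ∃ ε : ℝ, 0 < ε ∧ ∀ z : ℝ, |z| < ε → Ffun P Q (Dmeas μ z) = z)
    (hnd : ∀ u : ℝ, μ ≠ Measure.dirac u) :
    ¬ FDist P (P + Polynomial.C t * (Q - P)) := by
  rintro ⟨ν, hν, hinvν⟩
  obtain ⟨-, hP1, hQ1⟩ := hF
  -- moments of μ
  obtain ⟨hm1, hvarμ⟩ := momA P Q hP1 hQ1 μ hμ hinv
  -- the t-deformed denominator
  set Q' := P + Polynomial.C t * (Q - P) with hQ'
  have hQ'1 : Q'.eval 0 = 1 := by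
    rw [hQ']
    simp [hP1, hQ1]
  have hq'1 : Q'.coeff 1 = P.coeff 1 + t * (Q.coeff 1 - P.coeff 1) := by
    rw [hQ']
    simp [Polynomial.coeff_add, Polynomial.coeff_C_mul, Polynomial.coeff_sub]
  have hq'2 : Q'.coeff 2 = P.coeff 2 + t * (Q.coeff 2 - P.coeff 2) := by
    rw [hQ']
    simp [Polynomial.coeff_add, Polynomial.coeff_C_mul, Polynomial.coeff_sub]
  obtain ⟨hn1, hvarν⟩ := momA P Q' hP1 hQ'1 ν hν hinvν
  -- variance of μ is positive
  have hvμnn : 0 ≤ (∫ x, x^2 ∂μ) - (∫ x, x ∂μ)^2 := var_nonneg μ hμ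
  have hvμpos : 0 < (∫ x, x^2 ∂μ) - (∫ x, x ∂μ)^2 := by
    rcases lt_or_eq_of_le hvμnn with h | h
    · exact h
    · exact absurd (var_zero_dirac μ hμ h.symm) (hnd _)
  have hvνnn : 0 ≤ (∫ x, x^2 ∂ν) - (∫ x, x ∂ν)^2 := var_nonneg ν hν
  rw [hvarν, hq'1, hq'2] at hvνnn
  rw [hvarμ] at hvμpos
  nlinarith [hvμpos, hvνnn, mul_pos (neg_pos.mpr ht) hvμpos]
end
end

section
/- Let F₁=wP₁/Q₁ and F₂=wP₂/Q₂ belong to 𝓕, and assume N(F₁) ⊆ ℝ and N(F₂) ⊆ ℝ. Then for every w₀ ∈ ℂ with Q₁(w₀) ≠ 0 and Q₂(F₁(w₀)) ≠ 0 at which the complex derivative of the composition F₂∘F₁ vanishes, the value F₂(F₁(w₀)) is real. Consequently the composition F₂∘F₁, which again belongs to 𝓕, satisfies N(F₂∘F₁) ⊆ ℝ; that is, the class 𝓕_rr is closed under composition. -/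
open Polynomial MeasureTheory

noncomputable section

lemma ffunC_eq (P Q : Polynomial ℝ) :
    FfunC P Q = fun w => (X * P.map (algebraMap ℝ ℂ)).eval w / (Q.map (algebraMap ℝ ℂ)).eval w := by
  funext w
  simp [FfunC, Polynomial.eval_map, Polynomial.aeval_def]

lemma ffunC_hasDerivAt (P Q : Polynomial ℝ) (w : ℂ) (hQ : Polynomial.aeval w Q ≠ 0) :
    HasDerivAt (FfunC P Q)
      (((derivative (X * P.map (algebraMap ℝ ℂ))).eval w * (Q.map (algebraMap ℝ ℂ)).eval w
        - (X * P.map (algebraMap ℝ ℂ)).eval w * (derivative (Q.map (algebraMap ℝ ℂ))).eval w)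
        / ((Q.map (algebraMap ℝ ℂ)).eval w) ^ 2) w := by
  have hQ' : (Q.map (algebraMap ℝ ℂ)).eval w ≠ 0 := by
    rwa [Polynomial.eval_map, ← Polynomial.aeval_def]
  have h := ((X * P.map (algebraMap ℝ ℂ)).hasDerivAt w).div
    ((Q.map (algebraMap ℝ ℂ)).hasDerivAt w) hQ'
  rw [ffunC_eq]
  exact h

lemma crit_mem (P Q : Polynomial ℝ) (w : ℂ) (hQ : Polynomial.aeval w Q ≠ 0)
    (hd : (derivative (X * P.map (algebraMap ℝ ℂ))).eval w * (Q.map (algebraMap ℝ ℂ)).eval w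
      - (X * P.map (algebraMap ℝ ℂ)).eval w * (derivative (Q.map (algebraMap ℝ ℂ))).eval w = 0) :
    FfunC P Q w ∈ NSet P Q := by
  have hQ' : (Q.map (algebraMap ℝ ℂ)).eval w ≠ 0 := by
    rwa [Polynomial.eval_map, ← Polynomial.aeval_def]
  have hz : FfunC P Q w
      = (X * P.map (algebraMap ℝ ℂ)).eval w / (Q.map (algebraMap ℝ ℂ)).eval w :=
    congrFun (ffunC_eq P Q) w
  refine ⟨w, ?_, ?_⟩
  · rw [hz]
    simp only [Polynomial.eval_sub, Polynomial.eval_mul, Polynomial.eval_C]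
    rw [div_mul_cancel₀ _ hQ']
    simp
  · simp only [derivative_mul, derivative_X, Polynomial.derivative_map, Polynomial.eval_map,
      ← Polynomial.aeval_def, Polynomial.eval_mul, Polynomial.eval_add, Polynomial.eval_X,
      one_mul] at hd
    simp only [derivative_sub, derivative_C_mul, derivative_mul, derivative_X, derivative_C,
      Polynomial.derivative_map, Polynomial.eval_map, ← Polynomial.aeval_def,
      Polynomial.eval_sub, Polynomial.eval_mul, Polynomial.eval_add, Polynomial.eval_X,
      Polynomial.eval_C, Polynomial.eval_zero, one_mul, zero_mul, zero_add, FfunC]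
    field_simp
    linear_combination hd

lemma ffunC_real (P Q : Polynomial ℝ) (z : ℂ) (hz : z.im = 0) : (FfunC P Q z).im = 0 := by
  have hc : (starRingEnd ℂ) z = z := Complex.conj_eq_iff_im.mpr hz
  rw [← Complex.conj_eq_iff_im]
  have hP : (starRingEnd ℂ) (Polynomial.aeval z P) = Polynomial.aeval z P := by
    have := Polynomial.aeval_algHom_apply (Complex.conjAe) z P
    simp only [Complex.conjAe_coe] at this
    rw [hc] at this
    exact this.symm
  have hQ : (starRingEnd ℂ) (Polynomial.aeval z Q) = Polynomial.aeval z Q := by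
    have := Polynomial.aeval_algHom_apply (Complex.conjAe) z Q
    simp only [Complex.conjAe_coe] at this
    rw [hc] at this
    exact this.symm
  simp [FfunC, map_div₀, map_mul, hc, hP, hQ]

/-- if `N(F₁) ⊆ ℝ` and `N(F₂) ⊆ ℝ` then at every non-pole critical point of
the composition `F₂∘F₁` the value is real; consequently `N(F₂∘F₁) ⊆ ℝ`, i.e. `𝓕_rr`
is closed under composition. -/
theorem stmt6 (P₁ Q₁ P₂ Q₂ : Polynomial ℝ) (h₁ : InF P₁ Q₁) (h₂ : InF P₂ Q₂)
    (hN₁ : ∀ z ∈ NSet P₁ Q₁, z.im = 0) (hN₂ : ∀ z ∈ NSet P₂ Q₂, z.im = 0) :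
    (∀ w₀ : ℂ, Polynomial.aeval w₀ Q₁ ≠ 0 →
      Polynomial.aeval (FfunC P₁ Q₁ w₀) Q₂ ≠ 0 →
      deriv (fun w => FfunC P₂ Q₂ (FfunC P₁ Q₁ w)) w₀ = 0 →
      (FfunC P₂ Q₂ (FfunC P₁ Q₁ w₀)).im = 0) ∧
    (∀ z₀ : ℂ, (∃ w₀ : ℂ, Polynomial.aeval w₀ Q₁ ≠ 0 ∧
      Polynomial.aeval (FfunC P₁ Q₁ w₀) Q₂ ≠ 0 ∧
      deriv (fun w => FfunC P₂ Q₂ (FfunC P₁ Q₁ w)) w₀ = 0 ∧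
      FfunC P₂ Q₂ (FfunC P₁ Q₁ w₀) = z₀) → z₀.im = 0) := by
  have main : ∀ w₀ : ℂ, Polynomial.aeval w₀ Q₁ ≠ 0 →
      Polynomial.aeval (FfunC P₁ Q₁ w₀) Q₂ ≠ 0 →
      deriv (fun w => FfunC P₂ Q₂ (FfunC P₁ Q₁ w)) w₀ = 0 →
      (FfunC P₂ Q₂ (FfunC P₁ Q₁ w₀)).im = 0 := by
    intro w₀ hQ1 hQ2 hd
    set z₁ := FfunC P₁ Q₁ w₀ with hz₁
    have H1 := ffunC_hasDerivAt P₁ Q₁ w₀ hQ1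
    have H2 := ffunC_hasDerivAt P₂ Q₂ z₁ hQ2
    have Hc := H2.comp w₀ H1
    rw [show (fun w => FfunC P₂ Q₂ (FfunC P₁ Q₁ w)) = FfunC P₂ Q₂ ∘ FfunC P₁ Q₁ from rfl, Hc.deriv] at hd
    have hQ1' : (Q₁.map (algebraMap ℝ ℂ)).eval w₀ ≠ 0 := by
      rwa [Polynomial.eval_map, ← Polynomial.aeval_def]
    have hQ2' : (Q₂.map (algebraMap ℝ ℂ)).eval z₁ ≠ 0 := by
      rwa [Polynomial.eval_map, ← Polynomial.aeval_def]
    rcases mul_eq_zero.mp hd with h | h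
    · have hnum : (derivative (X * P₂.map (algebraMap ℝ ℂ))).eval z₁
          * (Q₂.map (algebraMap ℝ ℂ)).eval z₁
          - (X * P₂.map (algebraMap ℝ ℂ)).eval z₁
          * (derivative (Q₂.map (algebraMap ℝ ℂ))).eval z₁ = 0 := by
        rcases div_eq_zero_iff.mp h with h' | h'
        · exact h'
        · exact absurd h' (pow_ne_zero 2 hQ2')
      exact hN₂ _ (crit_mem P₂ Q₂ z₁ hQ2 hnum)
    · have hnum : (derivative (X * P₁.map (algebraMap ℝ ℂ))).eval w₀
          * (Q₁.map (algebraMap ℝ ℂ)).eval w₀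
          - (X * P₁.map (algebraMap ℝ ℂ)).eval w₀
          * (derivative (Q₁.map (algebraMap ℝ ℂ))).eval w₀ = 0 := by
        rcases div_eq_zero_iff.mp h with h' | h'
        · exact h'
        · exact absurd h' (pow_ne_zero 2 hQ1')
      have hz1im : z₁.im = 0 := hN₁ _ (crit_mem P₁ Q₁ w₀ hQ1 hnum)
      exact ffunC_real P₂ Q₂ z₁ hz1im
  refine ⟨main, ?_⟩
  rintro z₀ ⟨w₀, h1, h2, h3, rfl⟩
  exact main w₀ h1 h2 h3
end
end

section
/- Let F=wP/Q ∈ 𝓕, u ∈ ℝ and c ∈ ℝ∖{0}. Define the translation F₁(w)=F(w)/(1+uF(w))=wP(w)/(Q(w)+uwP(w)) and the dilation F₂(w)=F(cw)/c=wP(cw)/Q(cw), both again in 𝓕. Then, computing characteristic polynomials from the displayed numerator/denominator pairs (P, Q+uwP) and (P(c·), Q(c·)), one has the polynomial identities χ_{F₁}(w)=χ_F(w) and χ_{F₂}(w)=χ_F(cw). -/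
open Polynomial MeasureTheory

noncomputable section

/-- the characteristic polynomial is invariant under translation,
and transforms by `w ↦ cw` under dilation. -/
theorem stmt7 (P Q : Polynomial ℝ) (hF : InF P Q) (u c : ℝ) (hc : c ≠ 0) :
    charPoly P (Q + Polynomial.C u * X * P) = charPoly P Q ∧
    charPoly (P.comp (Polynomial.C c * X)) (Q.comp (Polynomial.C c * X))
      = (charPoly P Q).comp (Polynomial.C c * X) := by
  constructor
  · simp only [charPoly, derivative_add, derivative_mul, derivative_C, derivative_X]
    ring
  · simp only [charPoly, derivative_comp, derivative_mul, derivative_C, derivative_X,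
      sub_comp, add_comp, mul_comp, X_comp]
    ring
end
end

section
/- Let F=wP/Q ∈ 𝓕 and for t ∈ ℝ let χ_t be the characteristic polynomial of F^{⊞t}, so χ_t(w)=P(w)²+t[(P(w)+wP′(w))(Q(w)−P(w))−wP(w)(Q′(w)−P′(w))]. Suppose F admits a phase transition at t₀ > 0, i.e. every complex root of χ_{t₀} is real and there exists δ > 0 such that either χ_t has a non-real root for every t ∈ (t₀−δ, t₀), or χ_t has a non-real root for every t ∈ (t₀, t₀+δ). Then t₀ is critical for F: either χ_{t₀} has a multiple root, or deg χ_{t₀} ≤ deg χ_t − 2 for every t ≠ t₀. -/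
open Polynomial MeasureTheory

noncomputable section

noncomputable def Rpoly (P Q : Polynomial ℝ) : Polynomial ℝ :=
  (P + X * derivative P) * (Q - P) - X * P * (derivative Q - derivative P)

lemma chiT_eq (P Q : Polynomial ℝ) (t : ℝ) :
    chiT P Q t = P ^ 2 + C t * Rpoly P Q := by
  unfold chiT charPoly Rpoly
  rw [derivative_add, derivative_mul, derivative_C, derivative_sub]
  ring

lemma chiT_eval_zero (P Q : Polynomial ℝ) (hP : P.eval 0 = 1) (hQ : Q.eval 0 = 1) (t : ℝ) :
    (chiT P Q t).eval 0 = 1 := by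
  unfold chiT charPoly
  simp [hP, hQ]

lemma card_le_of_roots (p : Polynomial ℝ) (hp : p ≠ 0) (T : Finset ℂ)
    (hT : ∀ z ∈ T, Polynomial.aeval z p = 0) : T.card ≤ p.natDegree := by
  have hq : p.map (algebraMap ℝ ℂ) ≠ 0 :=
    (Polynomial.map_ne_zero_iff (algebraMap ℝ ℂ).injective).2 hp
  have hsub : T ⊆ (p.map (algebraMap ℝ ℂ)).roots.toFinset := by
    intro z hz
    rw [Multiset.mem_toFinset, Polynomial.mem_roots']
    refine ⟨hq, ?_⟩
    show (p.map (algebraMap ℝ ℂ)).eval z = 0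
    rw [Polynomial.eval_map, ← Polynomial.aeval_def]
    exact hT z hz
  calc T.card ≤ _ := Finset.card_le_card hsub
    _ ≤ ((p.map (algebraMap ℝ ℂ)).roots).card := Multiset.toFinset_card_le _
    _ ≤ (p.map (algebraMap ℝ ℂ)).natDegree := Polynomial.card_roots' _
    _ = p.natDegree := Polynomial.natDegree_map _

lemma aeval_ofReal' (p : Polynomial ℝ) (x : ℝ) :
    Polynomial.aeval (x : ℂ) p = ((p.eval x : ℝ) : ℂ) := by
  have := Polynomial.aeval_algebraMap_apply_eq_algebraMap_eval (A := ℂ) x p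
  simpa using this

lemma realRooted_of_finset (p : Polynomial ℝ) (hp : p ≠ 0) (T : Finset ℝ)
    (hT : ∀ x ∈ T, p.eval x = 0) (hdeg : p.natDegree ≤ T.card + 1) : RealRooted p := by
  intro z hz
  by_contra him
  set T' : Finset ℂ := insert z (insert ((starRingEnd ℂ) z) (T.image Complex.ofReal)) with hT'
  have hconjz : Polynomial.aeval ((starRingEnd ℂ) z) p = 0 := by
    rw [Polynomial.aeval_conj, hz, map_zero]
  have hroots : ∀ w ∈ T', Polynomial.aeval w p = 0 := by
    intro w hw
    rw [hT'] at hw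
    simp only [Finset.mem_insert, Finset.mem_image] at hw
    rcases hw with rfl | rfl | ⟨x, hx, rfl⟩
    · exact hz
    · exact hconjz
    · rw [aeval_ofReal', hT x hx, Complex.ofReal_zero]
  have hne : z ≠ (starRingEnd ℂ) z := by
    intro h
    apply him
    have h2 := congrArg Complex.im h
    simp only [Complex.conj_im] at h2
    linarith
  have hznotmem : z ∉ T.image Complex.ofReal := by
    intro h
    simp only [Finset.mem_image] at h
    obtain ⟨x, _, hx⟩ := h
    apply him
    rw [← hx]
    simp
  have hconjnotmem : (starRingEnd ℂ) z ∉ T.image Complex.ofReal := by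
    intro h
    simp only [Finset.mem_image] at h
    obtain ⟨x, _, hx⟩ := h
    apply him
    have h2 := congrArg Complex.im hx
    simp only [Complex.conj_im, Complex.ofReal_im] at h2
    linarith
  have hcard : T'.card = T.card + 2 := by
    rw [hT', Finset.card_insert_of_notMem (by simp [hne, hznotmem]),
      Finset.card_insert_of_notMem hconjnotmem,
      Finset.card_image_of_injective _ Complex.ofReal_injective]
  have := card_le_of_roots p hp T' hroots
  omega

lemma exists_rootFinset (p : Polynomial ℝ) (hp : p ≠ 0) (hrr : RealRooted p)
    (hsimple : ¬ ∃ x : ℝ, p.eval x = 0 ∧ (derivative p).eval x = 0) :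
    ∃ s : Finset ℝ, s.card = p.natDegree ∧ ∀ x ∈ s, p.eval x = 0 := by
  push_neg at hsimple
  set q := p.map (algebraMap ℝ ℂ) with hqdef
  have hq : q ≠ 0 := (Polynomial.map_ne_zero_iff (algebraMap ℝ ℂ).injective).2 hp
  have haq : ∀ z : ℂ, q.eval z = Polynomial.aeval z p := by
    intro z; rw [hqdef, Polynomial.eval_map, ← Polynomial.aeval_def]
  have hre : ∀ z ∈ q.roots, z.im = 0 := by
    intro z hz
    exact hrr z (by rw [← haq]; exact (Polynomial.mem_roots'.1 hz).2)
  have hnodup : q.roots.Nodup := by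
    rw [Multiset.nodup_iff_count_le_one]
    intro z
    rw [Polynomial.count_roots]
    by_contra hcount
    push_neg at hcount
    rw [Polynomial.one_lt_rootMultiplicity_iff_isRoot hq] at hcount
    obtain ⟨h0, h1⟩ := hcount
    have him : z.im = 0 := hrr z (by rw [← haq]; exact h0)
    have hzre : z = ((z.re : ℝ) : ℂ) := Complex.ext rfl (by simp [him])
    have he0 : p.eval z.re = 0 := by
      have := h0
      rw [Polynomial.IsRoot, hzre, haq, aeval_ofReal'] at this
      exact_mod_cast this
    have he1 : (derivative p).eval z.re = 0 := by
      have h1' := h1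
      rw [Polynomial.IsRoot, hqdef, Polynomial.derivative_map, hzre,
        Polynomial.eval_map, ← Polynomial.aeval_def, aeval_ofReal'] at h1'
      exact_mod_cast h1'
    exact (hsimple z.re he0) he1
  have hcards : q.roots.card = p.natDegree := by
    have hsplit : Polynomial.Splits q := IsAlgClosed.splits q
    rw [Polynomial.splits_iff_card_roots.1 hsplit, hqdef, Polynomial.natDegree_map]
  refine ⟨q.roots.toFinset.image Complex.re, ?_, ?_⟩
  · rw [Finset.card_image_of_injOn, Multiset.toFinset_card_of_nodup hnodup, hcards]
    intro z hz w hw hzw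
    have hz' := hre z (Multiset.mem_toFinset.1 hz)
    have hw' := hre w (Multiset.mem_toFinset.1 hw)
    exact Complex.ext hzw (by rw [hz', hw'])
  · intro x hx
    simp only [Finset.mem_image, Multiset.mem_toFinset] at hx
    obtain ⟨z, hz, rfl⟩ := hx
    have him := hre z hz
    have hzre : z = ((z.re : ℝ) : ℂ) := Complex.ext rfl (by simp [him])
    have := (Polynomial.mem_roots'.1 hz).2
    rw [Polynomial.IsRoot, haq, hzre, aeval_ofReal'] at this
    exact_mod_cast this

lemma exists_sign_change (p : Polynomial ℝ) (r : ℝ) (h0 : p.eval r = 0)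
    (h1 : (derivative p).eval r ≠ 0) (ε₀ : ℝ) (hε₀ : 0 < ε₀) :
    ∃ ε : ℝ, 0 < ε ∧ ε < ε₀ ∧ p.eval (r - ε) * p.eval (r + ε) < 0 := by
  set d := (derivative p).eval r with hd
  have hder : HasDerivAt (fun x => p.eval x) d r := p.hasDerivAt r
  rw [hasDerivAt_iff_tendsto_slope] at hder
  have hS : IsOpen {u : ℝ | 0 < u * d} :=
    isOpen_lt continuous_const (continuous_id.mul continuous_const)
  have hdS : d ∈ {u : ℝ | 0 < u * d} := mul_self_pos.mpr h1
  have hev : ∀ᶠ y in nhdsWithin r {r}ᶜ, 0 < slope (fun x => p.eval x) r y * d :=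
    hder (hS.mem_nhds hdS)
  rw [eventually_nhdsWithin_iff, Metric.eventually_nhds_iff] at hev
  obtain ⟨ε₁, hε₁, hev⟩ := hev
  set ε := min (ε₁ / 2) (ε₀ / 2) with hε
  have hεpos : 0 < ε := by positivity
  have hεlt : ε < ε₁ := lt_of_le_of_lt (min_le_left _ _) (by linarith)
  have hεlt0 : ε < ε₀ := lt_of_le_of_lt (min_le_right _ _) (by linarith)
  refine ⟨ε, hεpos, hεlt0, ?_⟩
  have hplus : 0 < slope (fun x => p.eval x) r (r + ε) * d := by
    apply hev
    · simp only [Real.dist_eq]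
      rw [show r + ε - r = ε by ring, abs_of_pos hεpos]
      exact hεlt
    · simp only [Set.mem_compl_iff, Set.mem_singleton_iff]
      intro h; linarith [hεpos, congrArg id h]
  have hminus : 0 < slope (fun x => p.eval x) r (r - ε) * d := by
    apply hev
    · simp only [Real.dist_eq]
      rw [show r - ε - r = -ε by ring, abs_neg, abs_of_pos hεpos]
      exact hεlt
    · simp only [Set.mem_compl_iff, Set.mem_singleton_iff]
      intro h; linarith [hεpos, congrArg id h]
  have hsplus : slope (fun x => p.eval x) r (r + ε) = p.eval (r + ε) / ε := by
    rw [slope_def_field]; rw [h0]; ring_nf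
  have hsminus : slope (fun x => p.eval x) r (r - ε) = p.eval (r - ε) / (-ε) := by
    rw [slope_def_field]; rw [h0]; ring_nf
  rw [hsplus] at hplus
  rw [hsminus] at hminus
  have hA : 0 < p.eval (r + ε) * d := by
    have := mul_pos hplus hεpos
    rw [div_mul_eq_mul_div, mul_comm] at this
    calc (0:ℝ) < p.eval (r+ε) / ε * d * ε := mul_pos hplus hεpos
      _ = p.eval (r+ε) * d := by field_simp
  have hB : p.eval (r - ε) * d < 0 := by
    have h2 : 0 < p.eval (r-ε) / (-ε) * d * ε := mul_pos hminus hεpos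
    have hdiv : ε / (-ε) = -1 := by rw [div_neg, div_self hεpos.ne']
    have h3 : p.eval (r-ε) / (-ε) * d * ε = -(p.eval (r-ε) * d) := by
      rw [show p.eval (r-ε) / (-ε) * d * ε = p.eval (r-ε) * d * (ε / -ε) by ring, hdiv]
      ring
    linarith [h2, h3 ▸ h2]
  nlinarith [sq_nonneg d, mul_pos hA (neg_pos.2 hB)]

lemma chiT_eval (P Q : Polynomial ℝ) (t x : ℝ) :
    (chiT P Q t).eval x = (P.eval x) ^ 2 + t * (Rpoly P Q).eval x := by
  rw [chiT_eq]; simp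

/-- if `F` admits a phase transition at `t₀ > 0` then `t₀` is critical:
either `χ_{t₀}` has a multiple (real) root, or `deg χ_{t₀} ≤ deg χ_t − 2` for all
`t ≠ t₀`. -/
theorem stmt10 (P Q : Polynomial ℝ) (hF : InF P Q) (t₀ : ℝ) (ht₀ : 0 < t₀)
    (hrr : RealRooted (chiT P Q t₀))
    (hpt : ∃ δ : ℝ, 0 < δ ∧
      ((∀ t : ℝ, t₀ - δ < t → t < t₀ → ¬ RealRooted (chiT P Q t)) ∨
       (∀ t : ℝ, t₀ < t → t < t₀ + δ → ¬ RealRooted (chiT P Q t)))) :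
    (∃ x : ℝ, (chiT P Q t₀).eval x = 0 ∧ (derivative (chiT P Q t₀)).eval x = 0) ∨
    (∀ t : ℝ, t ≠ t₀ → (chiT P Q t₀).natDegree + 2 ≤ (chiT P Q t).natDegree) := by
  obtain ⟨hcop, hP0, hQ0⟩ := hF
  by_cases hA : ∃ x : ℝ, (chiT P Q t₀).eval x = 0 ∧ (derivative (chiT P Q t₀)).eval x = 0
  · exact Or.inl hA
  by_cases hB : ∀ t : ℝ, t ≠ t₀ → (chiT P Q t₀).natDegree + 2 ≤ (chiT P Q t).natDegree
  · exact Or.inr hB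
  exfalso
  push_neg at hB
  obtain ⟨t₁, ht₁, hdegt₁⟩ := hB
  set k := (chiT P Q t₀).natDegree with hk
  have hne : ∀ t, chiT P Q t ≠ 0 := by
    intro t h
    have h1 := chiT_eval_zero P Q hP0 hQ0 t
    rw [h] at h1
    simp at h1
  -- degree bound: natDegree (chiT P Q t) ≤ k + 1 for all t
  have hdeg : ∀ t : ℝ, (chiT P Q t).natDegree ≤ k + 1 := by
    intro t
    rw [Polynomial.natDegree_le_iff_coeff_eq_zero]
    intro n hn
    have hc : ∀ s : ℝ, (chiT P Q s).coeff n = (P ^ 2).coeff n + s * (Rpoly P Q).coeff n := by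
      intro s
      rw [chiT_eq]
      simp [Polynomial.coeff_add, Polynomial.coeff_C_mul]
    have h0 : (P ^ 2).coeff n + t₀ * (Rpoly P Q).coeff n = 0 := by
      rw [← hc]
      exact Polynomial.coeff_eq_zero_of_natDegree_lt (by omega)
    have h1 : (P ^ 2).coeff n + t₁ * (Rpoly P Q).coeff n = 0 := by
      rw [← hc]
      exact Polynomial.coeff_eq_zero_of_natDegree_lt
        (lt_of_le_of_lt (by omega : (chiT P Q t₁).natDegree ≤ k + 1) (by omega))
    have hR : (Rpoly P Q).coeff n = 0 := by
      rcases mul_eq_zero.1 (show (t₀ - t₁) * (Rpoly P Q).coeff n = 0 by linarith) with h | h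
      · exact absurd (by linarith : t₁ = t₀) ht₁
      · exact h
    rw [hc, hR]
    rw [hR] at h0
    linarith
  -- finset of simple real roots of chi_{t₀}
  obtain ⟨s, hscard, hsroot⟩ := exists_rootFinset (chiT P Q t₀) (hne t₀) hrr hA
  have hder : ∀ r ∈ s, (derivative (chiT P Q t₀)).eval r ≠ 0 := by
    intro r hr h
    exact hA ⟨r, hsroot r hr, h⟩
  -- choose separation + sign-change radii
  have hsep : ∀ r ∈ s, ∃ ε : ℝ, 0 < ε ∧
      (∀ r' ∈ s, r' ≠ r → 3 * ε ≤ |r - r'|) ∧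
      (chiT P Q t₀).eval (r - ε) * (chiT P Q t₀).eval (r + ε) < 0 := by
    intro r hr
    obtain ⟨ε₀, hε₀pos, hε₀⟩ : ∃ ε₀ : ℝ, 0 < ε₀ ∧ ∀ r' ∈ s, r' ≠ r → 3 * ε₀ ≤ |r - r'| := by
      by_cases hne' : (s.erase r).Nonempty
      · refine ⟨(s.erase r).inf' hne' (fun r' => |r - r'|) / 3, ?_, ?_⟩
        · have hpos : 0 < (s.erase r).inf' hne' (fun r' => |r - r'|) := by
            rw [Finset.lt_inf'_iff]
            intro r' hr'
            exact abs_pos.2 (sub_ne_zero.2 (Ne.symm (Finset.ne_of_mem_erase hr')))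
          linarith
        · intro r' h1 h2
          have hm : (s.erase r).inf' hne' (fun x => |r - x|) ≤ |r - r'| :=
            Finset.inf'_le _ (Finset.mem_erase.2 ⟨h2, h1⟩)
          linarith
      · refine ⟨1, one_pos, fun r' h1 h2 => absurd ⟨r', Finset.mem_erase.2 ⟨h2, h1⟩⟩ hne'⟩
    obtain ⟨ε, hε1, hε2, hε3⟩ := exists_sign_change _ r (hsroot r hr) (hder r hr) ε₀ hε₀pos
    exact ⟨ε, hε1, fun r' h1 h2 => le_trans (by linarith) (hε₀ r' h1 h2), hε3⟩
  choose! ε hεpos hεsep hεsign using hsep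
  -- the sign change persists for t near t₀
  have hall : ∀ᶠ t in nhds t₀, ∀ r ∈ s,
      (chiT P Q t).eval (r - ε r) * (chiT P Q t).eval (r + ε r) < 0 := by
    rw [Filter.eventually_all_finset]
    intro r hr
    have hc : Continuous (fun t : ℝ =>
        (chiT P Q t).eval (r - ε r) * (chiT P Q t).eval (r + ε r)) := by
      simp only [chiT_eval]
      fun_prop
    have hopen : IsOpen {x : ℝ | x < 0} := isOpen_lt continuous_id continuous_const
    exact (hc.tendsto t₀) (hopen.mem_nhds (hεsign r hr))
  -- hence real-rootedness persists for t near t₀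
  have hRR : ∀ᶠ t in nhds t₀, RealRooted (chiT P Q t) := by
    filter_upwards [hall] with t ht
    have hroot : ∀ r ∈ s, ∃ x, x ∈ Set.Ioo (r - ε r) (r + ε r) ∧ (chiT P Q t).eval x = 0 := by
      intro r hr
      have hprod := ht r hr
      have hab : r - ε r ≤ r + ε r := by have := hεpos r hr; linarith
      have hcont : ContinuousOn (fun x => (chiT P Q t).eval x) (Set.Icc (r - ε r) (r + ε r)) :=
        ((chiT P Q t).continuous_aeval).continuousOn
      rcases lt_or_gt_of_ne (fun h : (chiT P Q t).eval (r - ε r) = 0 => by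
          rw [h, zero_mul] at hprod; exact lt_irrefl _ hprod) with hlt | hgt
      · -- eval (r - ε) < 0, so eval (r + ε) > 0
        have hpos : 0 < (chiT P Q t).eval (r + ε r) := by nlinarith
        have h0mem : (0:ℝ) ∈ Set.Ioo ((chiT P Q t).eval (r - ε r)) ((chiT P Q t).eval (r + ε r)) :=
          ⟨hlt, hpos⟩
        obtain ⟨x, hx1, hx2⟩ := intermediate_value_Ioo hab hcont h0mem
        exact ⟨x, hx1, hx2⟩
      · have hneg : (chiT P Q t).eval (r + ε r) < 0 := by nlinarith
        have h0mem : (0:ℝ) ∈ Set.Ioo ((chiT P Q t).eval (r + ε r)) ((chiT P Q t).eval (r - ε r)) :=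
          ⟨hneg, hgt⟩
        obtain ⟨x, hx1, hx2⟩ := intermediate_value_Ioo' hab hcont h0mem
        exact ⟨x, hx1, hx2⟩
    choose! xr hx1 hx2 using hroot
    have hinj : Set.InjOn xr s := by
      intro r hr r' hr' hxx
      by_contra hrr'
      have h3r : 3 * ε r ≤ |r - r'| := hεsep r hr r' hr' (Ne.symm hrr')
      have h3r' : 3 * ε r' ≤ |r - r'| := hεsep r' hr' r hr hrr' |>.trans_eq (abs_sub_comm r' r)
      have hm1 := hx1 r hr
      have hm2 := hx1 r' hr'
      have hb1 : |r - xr r| < ε r := by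
        rw [abs_lt]
        constructor <;> [skip; skip] <;>
          · obtain ⟨u, v⟩ := hm1; linarith
      have hb2 : |xr r' - r'| < ε r' := by
        rw [abs_lt]
        constructor <;> [skip; skip] <;>
          · obtain ⟨u, v⟩ := hm2; linarith
      rw [hxx] at hb1
      have htri : |r - r'| ≤ |r - xr r'| + |xr r' - r'| := abs_sub_le r (xr r') r'
      have hεr := hεpos r hr
      have hεr' := hεpos r' hr'
      linarith [htri, hb1, hb2, h3r, h3r']
    have hcard : (s.image xr).card = k := by
      rw [Finset.card_image_of_injOn hinj, hscard]
    apply realRooted_of_finset (chiT P Q t) (hne t) (s.image xr)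
    · intro x hx
      obtain ⟨r, hr, rfl⟩ := Finset.mem_image.1 hx
      exact hx2 r hr
    · rw [hcard]
      exact hdeg t
  -- contradiction with the phase transition hypothesis
  rw [Metric.eventually_nhds_iff] at hRR
  obtain ⟨δ', hδ'pos, hδ'⟩ := hRR
  obtain ⟨δ, hδpos, hside⟩ := hpt
  have hminpos : 0 < min δ δ' := lt_min hδpos hδ'pos
  have h2δ : min δ δ' / 2 < δ := lt_of_lt_of_le (half_lt_self hminpos) (min_le_left _ _)
  have h2δ' : min δ δ' / 2 < δ' := lt_of_lt_of_le (half_lt_self hminpos) (min_le_right _ _)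
  have hhalfpos : 0 < min δ δ' / 2 := by positivity
  rcases hside with h | h
  · apply h (t₀ - min δ δ' / 2) (by linarith) (by linarith)
    apply hδ'
    rw [Real.dist_eq, show t₀ - min δ δ' / 2 - t₀ = -(min δ δ' / 2) by ring, abs_neg,
      abs_of_pos hhalfpos]
    exact h2δ'
  · apply h (t₀ + min δ δ' / 2) (by linarith) (by linarith)
    apply hδ'
    rw [Real.dist_eq, show t₀ + min δ δ' / 2 - t₀ = min δ δ' / 2 by ring,
      abs_of_pos hhalfpos]
    exact h2δ'
end
end

section
/- Let r ≥ 1, c₀ ≥ 0, c₁,…,c_r > 0 and let u₁,…,u_r ∈ ℝ∖{0} be pairwise distinct. Define P(w)=∏_{k=1}^r (1−u_k w) and Q(w)=(1+c₀w²)∏_{k=1}^r(1−u_k w) + ∑_{k=1}^r c_k u_k w ∏_{i≠k}(1−u_i w), and let F=wP/Q ∈ 𝓕 (so the R-transform of F is R(w)=c₀w² + ∑_{k=1}^r c_k u_k w/(1−u_k w)). Then there exists t₀ > 0 such that for every t ∈ (0,t₀), every complex root of the characteristic polynomial χ_t of F^{⊞t} is real (i.e. F^{⊞t} ∈ 𝓕_rr⁰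 for all 0 < t < t₀). -/
open Polynomial MeasureTheory

noncomputable section

/-- The bracket function. -/
def Gval (P Q : Polynomial ℝ) (x : ℝ) : ℝ :=
  (eval x P + x * eval x (derivative P)) * (eval x Q - eval x P)
    - x * eval x P * (eval x (derivative Q) - eval x (derivative P))

lemma eval_chiT (P Q : Polynomial ℝ) (t x : ℝ) :
    eval x (chiT P Q t) = (eval x P) ^ 2 + t * Gval P Q x := by
  simp only [chiT, charPoly, Gval, derivative_add, derivative_mul, derivative_sub, derivative_C,
    eval_add, eval_sub, eval_mul, eval_X, eval_C, eval_zero, zero_mul, add_zero]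
  ring

lemma chi_pos_at (P Q : Polynomial ℝ) (x : ℝ) (hx : eval x P ≠ 0) (t : ℝ) (ht : 0 < t)
    (ht2 : t < (eval x P) ^ 2 / (|Gval P Q x| + 1)) : 0 < eval x (chiT P Q t) := by
  rw [eval_chiT]
  have h1 : (0:ℝ) < |Gval P Q x| + 1 := by positivity
  have h2 : t * (|Gval P Q x| + 1) < (eval x P) ^ 2 := (lt_div_iff₀ h1).mp ht2
  nlinarith [mul_le_mul_of_nonneg_left (neg_abs_le (Gval P Q x)) ht.le, abs_nonneg (Gval P Q x)]

lemma realRooted_of_card (p : Polynomial ℝ) (h : p.natDegree ≤ Multiset.card p.roots)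
    (hp : p ≠ 0) : RealRooted p := by
  have hcard : Multiset.card p.roots = p.natDegree := le_antisymm (card_roots' p) h
  have hs : Splits p := splits_iff_card_roots.mpr hcard
  intro z hz
  have hlc : (algebraMap ℝ ℂ) p.leadingCoeff ≠ 0 := by
    simpa using leadingCoeff_ne_zero.mpr hp
  rw [hs.eq_prod_roots, map_mul, aeval_C, map_multiset_prod,
    Multiset.map_map] at hz
  rcases mul_eq_zero.mp hz with h' | h'
  · exact absurd h' hlc
  · have h0 := Multiset.prod_eq_zero_iff.mp h'
    obtain ⟨a, _, hw0⟩ := Multiset.mem_map.mp h0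
    simp only [Function.comp_apply, map_sub, aeval_X, aeval_C] at hw0
    have hza : z = algebraMap ℝ ℂ a := by linear_combination hw0
    simp [hza]

lemma card_roots_ge (p : Polynomial ℝ) (n : ℕ) (y : ℕ → ℝ)
    (hmono : ∀ i, i < n → y i < y (i + 1))
    (hsign : ∀ i, i < n → eval (y i) p * eval (y (i + 1)) p < 0) :
    n ≤ Multiset.card p.roots := by
  rcases Nat.eq_zero_or_pos n with rfl | hn
  · simp
  have hp : p ≠ 0 := by
    rintro rfl
    have := hsign 0 hn
    simp at this
  have hyle : ∀ a b, a ≤ b → b ≤ n → y a ≤ y b := by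
    intro a b hab hbn
    induction b with
    | zero =>
      have : a = 0 := by omega
      subst this; exact le_rfl
    | succ m ih =>
      rcases Nat.lt_or_ge a (m + 1) with h | h
      · exact le_trans (ih (by omega) (by omega)) (hmono m (by omega)).le
      · have : a = m + 1 := by omega
        subst this; exact le_rfl
  have hroot : ∀ i : Fin n, ∃ zz, zz ∈ Set.Ioo (y i) (y ((i : ℕ) + 1)) ∧ eval zz p = 0 := by
    rintro ⟨i, hi⟩
    have hcont : ContinuousOn (fun x => eval x p) (Set.Icc (y i) (y (i + 1))) :=
      (Polynomial.continuous p).continuousOn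
    rcases mul_neg_iff.mp (hsign i hi) with ⟨h1, h2⟩ | ⟨h1, h2⟩
    · have h0 : (0 : ℝ) ∈ Set.Ioo (eval (y (i + 1)) p) (eval (y i) p) := ⟨h2, h1⟩
      obtain ⟨zz, hzz, hzz0⟩ := intermediate_value_Ioo' (hmono i hi).le hcont h0
      exact ⟨zz, hzz, hzz0⟩
    · have h0 : (0 : ℝ) ∈ Set.Ioo (eval (y i) p) (eval (y (i + 1)) p) := ⟨h1, h2⟩
      obtain ⟨zz, hzz, hzz0⟩ := intermediate_value_Ioo (hmono i hi).le hcont h0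
      exact ⟨zz, hzz, hzz0⟩
  choose z hz1 hz2 using hroot
  have key : ∀ i j : Fin n, i < j → z i < z j := by
    intro i j hij
    have h1 : z i < y ((i : ℕ) + 1) := (hz1 i).2
    have h2 : y (j : ℕ) < z j := (hz1 j).1
    have h3 : y ((i : ℕ) + 1) ≤ y (j : ℕ) := hyle _ _ (by omega) (by omega)
    linarith
  have hzinj : Function.Injective z := by
    intro i j hij
    rcases lt_trichotomy i j with h | h | h
    · exact absurd hij (key i j h).ne
    · exact h
    · exact absurd hij.symm (key j i h).ne
  have hsub : Finset.univ.image z ⊆ p.roots.toFinset := by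
    intro w hw
    obtain ⟨i, _, rfl⟩ := Finset.mem_image.mp hw
    rw [Multiset.mem_toFinset, mem_roots hp]
    exact hz2 i
  calc n = (Finset.univ.image z).card := by
        rw [Finset.card_image_of_injective _ hzinj, Finset.card_univ, Fintype.card_fin]
    _ ≤ p.roots.toFinset.card := Finset.card_le_card hsub
    _ ≤ Multiset.card p.roots := Multiset.toFinset_card_le _

section Specific

variable {r : ℕ} (c₀ : ℝ) (c u : Fin r → ℝ)

/-- The polynomial `P`. -/
def Pp (u : Fin r → ℝ) : Polynomial ℝ := ∏ k : Fin r, (1 - C (u k) * X)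

/-- The sum part of `Q`. -/
def Ssum (c u : Fin r → ℝ) : Polynomial ℝ :=
  ∑ k : Fin r, C (c k * u k) * X * ∏ i ∈ Finset.univ.erase k, (1 - C (u i) * X)

/-- The polynomial `Q`. -/
def Qq (c₀ : ℝ) (c u : Fin r → ℝ) : Polynomial ℝ :=
  (1 + C c₀ * X ^ 2) * Pp u + Ssum c u

lemma evalP_root (j : Fin r) (hu : u j ≠ 0) : eval ((u j)⁻¹) (Pp u) = 0 := by
  rw [Pp, eval_prod]
  apply Finset.prod_eq_zero (Finset.mem_univ j)
  simp [mul_inv_cancel₀ hu]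

lemma evalP'_root (j : Fin r) (hu : u j ≠ 0) :
    eval ((u j)⁻¹) (derivative (Pp u))
      = -(u j) * ∏ i ∈ Finset.univ.erase j, (1 - u i * (u j)⁻¹) := by
  rw [Pp, ← Finset.mul_prod_erase _ _ (Finset.mem_univ j), derivative_mul]
  simp [derivative_sub, derivative_one, derivative_C_mul_X, eval_prod,
    mul_inv_cancel₀ hu]

lemma evalQ_root (j : Fin r) (hu : u j ≠ 0) (huinj : Function.Injective u) :
    eval ((u j)⁻¹) (Qq c₀ c u)
      = c j * ∏ i ∈ Finset.univ.erase j, (1 - u i * (u j)⁻¹) := by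
  rw [Qq, eval_add, eval_mul, evalP_root u j hu, mul_zero, zero_add, Ssum, eval_finset_sum]
  rw [Finset.sum_eq_single j]
  · rw [eval_mul, eval_mul, eval_C, eval_X, eval_prod]
    have h1 : c j * u j * (u j)⁻¹ = c j := by field_simp
    rw [h1]
    congr 1
    apply Finset.prod_congr rfl
    intro i _
    simp
  · intro b _ hbj
    rw [eval_mul]
    apply mul_eq_zero_of_right
    rw [eval_prod]
    apply Finset.prod_eq_zero (Finset.mem_erase.mpr ⟨Ne.symm hbj, Finset.mem_univ j⟩)
    simp [mul_inv_cancel₀ hu]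
  · intro h
    exact absurd (Finset.mem_univ j) h

lemma D_ne_zero (j : Fin r) (huinj : Function.Injective u) (hu : ∀ k, u k ≠ 0) :
    (∏ i ∈ Finset.univ.erase j, (1 - u i * (u j)⁻¹)) ≠ 0 := by
  rw [Finset.prod_ne_zero_iff]
  intro i hi h
  have hij : i ≠ j := (Finset.mem_erase.mp hi).1
  apply hij
  apply huinj
  have h1 : u i * (u j)⁻¹ = 1 := by linarith
  field_simp at h1
  exact div_eq_one_iff_eq (hu j) |>.mp h1

lemma chi_neg (j : Fin r) (hc : 0 < c j) (hu : ∀ k, u k ≠ 0)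
    (huinj : Function.Injective u) (t : ℝ) (ht : 0 < t) :
    eval ((u j)⁻¹) (chiT (Pp u) (Qq c₀ c u) t) < 0 := by
  set D := ∏ i ∈ Finset.univ.erase j, (1 - u i * (u j)⁻¹) with hD
  have hD0 : D ≠ 0 := D_ne_zero u j huinj hu
  have heq : eval ((u j)⁻¹) (chiT (Pp u) (Qq c₀ c u) t) = -(t * (c j * D ^ 2)) := by
    rw [eval_chiT, Gval, evalP_root u j (hu j), evalP'_root u j (hu j),
      evalQ_root c₀ c u j (hu j) huinj, ← hD]
    linear_combination (-(t * c j * D ^ 2)) * inv_mul_cancel₀ (hu j)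
  rw [heq, neg_lt_zero]
  exact mul_pos ht (mul_pos hc (pow_two_pos_of_ne_zero hD0))

lemma fact_ne_zero (a : ℝ) : (1 - C a * X) ≠ 0 := fun h => by
  simpa using congrArg (eval 0) h

lemma natDegree_fact_le (a : ℝ) : (1 - C a * X).natDegree ≤ 1 :=
  le_trans (natDegree_sub_le _ _)
    (max_le (by simp) ((natDegree_C_mul_le a X).trans natDegree_X.le))

lemma natDegree_fact (a : ℝ) (ha : a ≠ 0) : (1 - C a * X).natDegree = 1 := by
  rw [show (1 : Polynomial ℝ) - C a * X = C (-a) * X + C 1 by rw [map_neg, map_one]; ring]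
  exact natDegree_linear (neg_ne_zero.mpr ha)

lemma leadingCoeff_fact (a : ℝ) (ha : a ≠ 0) : (1 - C a * X).leadingCoeff = -a := by
  rw [show (1 : Polynomial ℝ) - C a * X = C (-a) * X + C 1 by rw [map_neg, map_one]; ring]
  exact leadingCoeff_linear (neg_ne_zero.mpr ha)


lemma natDegree_Pp (hu : ∀ k, u k ≠ 0) : (Pp u).natDegree = r := by
  rw [Pp, natDegree_prod _ _ fun k _ => fact_ne_zero (u k)]
  simp [fun k : Fin r => natDegree_fact (u k) (hu k)]

lemma natDegree_Pp_le : (Pp u).natDegree ≤ r := by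
  exact le_trans (natDegree_prod_le _ _)
    (by simpa using Finset.sum_le_card_nsmul Finset.univ _ 1 fun k _ => natDegree_fact_le (u k))

lemma leadingCoeff_Pp (hu : ∀ k, u k ≠ 0) : (Pp u).leadingCoeff = ∏ k, -(u k) := by
  rw [Pp, leadingCoeff_prod]
  exact Finset.prod_congr rfl fun k _ => leadingCoeff_fact (u k) (hu k)

lemma coeff_Pp (hu : ∀ k, u k ≠ 0) : (Pp u).coeff r = ∏ k, -(u k) := by
  have h := natDegree_Pp u hu
  calc (Pp u).coeff r = (Pp u).coeff (Pp u).natDegree := by rw [h]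
    _ = (Pp u).leadingCoeff := coeff_natDegree
    _ = ∏ k, -(u k) := leadingCoeff_Pp u hu

lemma natDegree_Ssum_le (hr : 1 ≤ r) : (Ssum c u).natDegree ≤ r := by
  apply natDegree_sum_le_of_forall_le
  intro k _
  refine le_trans natDegree_mul_le ?_
  have h1 : (C (c k * u k) * X).natDegree ≤ 1 := by
    refine le_trans (natDegree_C_mul_le _ _) (by simp)
  have h2 : (∏ i ∈ Finset.univ.erase k, (1 - C (u i) * X)).natDegree ≤ r - 1 := by
    refine le_trans (natDegree_prod_le _ _) ?_
    simpa [Finset.card_erase_of_mem] using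
      Finset.sum_le_card_nsmul (Finset.univ.erase k) _ 1 fun i _ => natDegree_fact_le (u i)
  omega

lemma QsubP_decomp : Qq c₀ c u - Pp u = C c₀ * (X ^ 2 * Pp u) + Ssum c u := by
  rw [Qq]; ring

lemma natDegree_QsubP_le (hr : 1 ≤ r) : (Qq c₀ c u - Pp u).natDegree ≤ r + 2 := by
  rw [QsubP_decomp]
  refine le_trans (natDegree_add_le _ _) (max_le ?_ ?_)
  · refine le_trans (natDegree_C_mul_le _ _) (le_trans natDegree_mul_le ?_)
    have := natDegree_Pp_le u
    simp only [natDegree_X_pow]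
    omega
  · exact le_trans (natDegree_Ssum_le c u hr) (by omega)

lemma natDegree_QsubP_le' (hr : 1 ≤ r) (hc0 : c₀ = 0) : (Qq c₀ c u - Pp u).natDegree ≤ r := by
  rw [QsubP_decomp, hc0]
  simpa using natDegree_Ssum_le c u hr

lemma coeff_QsubP (hr : 1 ≤ r) (hu : ∀ k, u k ≠ 0) :
    (Qq c₀ c u - Pp u).coeff (r + 2) = c₀ * ∏ k, -(u k) := by
  rw [QsubP_decomp, coeff_add, coeff_C_mul, coeff_X_pow_mul, coeff_Pp u hu,
    coeff_eq_zero_of_natDegree_lt (lt_of_le_of_lt (natDegree_Ssum_le c u hr) (by omega)),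
    add_zero]

lemma natDegree_chiT_le (P Q : Polynomial ℝ) (t : ℝ) (n m : ℕ) (hn : 1 ≤ n) (hnm : n ≤ m)
    (hP : P.natDegree ≤ n) (hQP : (Q - P).natDegree ≤ m) :
    (chiT P Q t).natDegree ≤ n + m := by
  have hQt : (P + C t * (Q - P)).natDegree ≤ m :=
    le_trans (natDegree_add_le _ _)
      (max_le (le_trans hP hnm) (le_trans (natDegree_C_mul_le _ _) hQP))
  have hA : (P + X * derivative P).natDegree ≤ n := by
    refine le_trans (natDegree_add_le _ _) (max_le hP ?_)
    refine le_trans natDegree_mul_le ?_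
    have := natDegree_derivative_le P
    simp only [natDegree_X]
    omega
  have hD : (derivative (P + C t * (Q - P))).natDegree ≤ m - 1 := by
    have := natDegree_derivative_le (P + C t * (Q - P))
    omega
  rw [chiT, charPoly]
  refine le_trans (natDegree_sub_le _ _) (max_le ?_ ?_)
  · exact le_trans natDegree_mul_le (add_le_add hA hQt)
  · refine le_trans natDegree_mul_le ?_
    have h1 : (X * P).natDegree ≤ 1 + n := le_trans natDegree_mul_le (by simp [hP])
    omega

lemma chi_coeff_top (hr : 1 ≤ r) (hu : ∀ k, u k ≠ 0) (t : ℝ) :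
    (chiT (Pp u) (Qq c₀ c u) t).coeff (r + (r + 2))
      = -(t * c₀ * (∏ k, -(u k)) ^ 2) := by
  obtain ⟨s, rfl⟩ : ∃ s, r = s + 1 := ⟨r - 1, by omega⟩
  set L := ∏ k, -(u k) with hL
  set P := Pp u
  set Q := Qq c₀ c u
  have hPdeg : P.natDegree = s + 1 := natDegree_Pp u hu
  have hA_le : (P + X * derivative P).natDegree ≤ s + 1 := by
    refine le_trans (natDegree_add_le _ _) (max_le (le_of_eq hPdeg) ?_)
    refine le_trans natDegree_mul_le ?_
    have := natDegree_derivative_le P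
    simp only [natDegree_X]
    omega
  have hA_coeff : (P + X * derivative P).coeff (s + 1) = L * ((s + 1 : ℕ) + 1) := by
    rw [coeff_add, coeff_X_mul, coeff_derivative]
    rw [show P.coeff (s + 1) = L from coeff_Pp u hu]
    push_cast
    ring
  have hQt_le : (P + C t * (Q - P)).natDegree ≤ s + 1 + 2 :=
    le_trans (natDegree_add_le _ _)
      (max_le (hPdeg.le.trans (by omega)) (le_trans (natDegree_C_mul_le _ _) (natDegree_QsubP_le c₀ c u hr)))
  have hQt_coeff : (P + C t * (Q - P)).coeff (s + 1 + 2) = t * (c₀ * L) := by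
    rw [coeff_add, coeff_C_mul, coeff_QsubP c₀ c u hr hu,
      coeff_eq_zero_of_natDegree_lt (by omega : P.natDegree < s + 1 + 2), zero_add]
  have hXP_le : (X * P).natDegree ≤ s + 1 + 1 := le_trans natDegree_mul_le (by simp [hPdeg]; omega)
  have hXP_coeff : (X * P).coeff (s + 1 + 1) = L := by
    rw [coeff_X_mul]; exact coeff_Pp u hu
  have hD_le : (derivative (P + C t * (Q - P))).natDegree ≤ s + 1 + 1 := by
    have h2 := natDegree_derivative_le (P + C t * (Q - P))
    omega
  have hD_coeff : (derivative (P + C t * (Q - P))).coeff (s + 1 + 1)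
      = t * (c₀ * L) * ((s + 1 + 1 : ℕ) + 1) := by
    rw [coeff_derivative, hQt_coeff]
  rw [chiT, charPoly, coeff_sub]
  rw [show (s + 1) + (s + 1 + 2) = (s + 1) + (s + 1 + 2) from rfl]
  rw [coeff_mul_add_eq_of_natDegree_le hA_le hQt_le]
  have h3 : (X * P * derivative (P + C t * (Q - P))).coeff ((s + 1) + (s + 1 + 2))
      = (X * P).coeff (s + 1 + 1) * (derivative (P + C t * (Q - P))).coeff (s + 1 + 1) := by
    rw [show (s + 1) + (s + 1 + 2) = (s + 1 + 1) + (s + 1 + 1) by omega]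
    exact coeff_mul_add_eq_of_natDegree_le hXP_le hD_le
  rw [h3, hA_coeff, hQt_coeff, hXP_coeff, hD_coeff]
  push_cast
  ring

end Specific

open Filter in
lemma exists_eval_neg_right (p : Polynomial ℝ) (hdeg : 0 < p.natDegree)
    (hlc : p.leadingCoeff < 0) (b : ℝ) : ∃ x, b < x ∧ eval x p < 0 := by
  have h1 : Tendsto (fun x => eval x p) atTop atBot :=
    p.tendsto_atBot_of_leadingCoeff_nonpos (natDegree_pos_iff_degree_pos.mp hdeg) hlc.le
  have h2 : ∀ᶠ x in atTop, eval x p < 0 := h1.eventually (eventually_lt_atBot 0)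
  obtain ⟨x, hx1, hx2⟩ := (h2.and (eventually_gt_atTop b)).exists
  exact ⟨x, hx2, hx1⟩

open Filter in
lemma exists_eval_neg_left (p : Polynomial ℝ) (hdeg : 0 < p.natDegree)
    (heven : Even p.natDegree) (hlc : p.leadingCoeff < 0) (b : ℝ) :
    ∃ x, x < b ∧ eval x p < 0 := by
  set q := p.comp (-X) with hq
  have hqdeg : q.natDegree = p.natDegree := by rw [hq, natDegree_comp]; simp
  have hqlc : q.leadingCoeff = p.leadingCoeff := by
    rw [hq, leadingCoeff_comp (by simp)]
    simp [heven.neg_one_pow]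
  obtain ⟨x, hx1, hx2⟩ := exists_eval_neg_right q (hqdeg ▸ hdeg) (hqlc ▸ hlc) (-b)
  refine ⟨-x, by linarith, ?_⟩
  have h3 : eval x q = eval (-x) p := by rw [hq, eval_comp]; simp
  rw [← h3]; exact hx2


/-- for `F` with R-transform `R(w) = c₀w² + ∑ c_k u_k w/(1−u_k w)`
(i.e. a freely infinitely divisible element of `𝓕`), there is `t₀ > 0` such that for all
`0 < t < t₀` every complex root of the characteristic polynomial `χ_t` of `F^{⊞t}` is
real. -/
theorem stmt11 (r : ℕ) (hr : 1 ≤ r) (c₀ : ℝ) (hc₀ : 0 ≤ c₀)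
    (c u : Fin r → ℝ) (hc : ∀ k, 0 < c k) (hu : ∀ k, u k ≠ 0)
    (huinj : Function.Injective u) :
    ∃ t₀ : ℝ, 0 < t₀ ∧ ∀ t : ℝ, 0 < t → t < t₀ →
      RealRooted (chiT
        (∏ k : Fin r, (1 - Polynomial.C (u k) * X))
        ((1 + Polynomial.C c₀ * X ^ 2) * ∏ k : Fin r, (1 - Polynomial.C (u k) * X)
          + ∑ k : Fin r, Polynomial.C (c k * u k) * X *
              ∏ i ∈ Finset.univ.erase k, (1 - Polynomial.C (u i) * X))
        t) := by
  classical
  show ∃ t₀ : ℝ, 0 < t₀ ∧ ∀ t : ℝ, 0 < t → t < t₀ → RealRooted (chiT (Pp u) (Qq c₀ c u) t)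
  have hinvinj : Function.Injective fun k : Fin r => (u k)⁻¹ :=
    fun i j h => huinj (inv_injective h)
  set P := Pp u with hPdef
  set Q := Qq c₀ c u with hQdef
  set T := Finset.image (fun k : Fin r => (u k)⁻¹) Finset.univ with hTdef
  have hTcard : T.card = r := by
    rw [hTdef, Finset.card_image_of_injective _ hinvinj]; simp
  set xs : Fin r → ℝ := fun i => ((T.orderIsoOfFin hTcard) i : ℝ) with hxsdef
  have hxs_mono : ∀ i j : Fin r, i < j → xs i < xs j := fun i j h =>
    Subtype.coe_lt_coe.mpr ((T.orderIsoOfFin hTcard).strictMono h)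
  have hxs_memT : ∀ i, xs i ∈ T := fun i => ((T.orderIsoOfFin hTcard) i).2
  have hneg : ∀ v ∈ T, ∀ s : ℝ, 0 < s → eval v (chiT P Q s) < 0 := by
    intro v hv s hs
    obtain ⟨j, _, rfl⟩ := Finset.mem_image.mp hv
    exact chi_neg c₀ c u j (hc j) hu huinj s hs
  have hProotT : ∀ v : ℝ, eval v P = 0 → v ∈ T := by
    intro v hv
    rw [hPdef, Pp, eval_prod] at hv
    obtain ⟨k, _, hk⟩ := Finset.prod_eq_zero_iff.mp hv
    simp only [eval_sub, eval_one, eval_mul, eval_C, eval_X] at hk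
    have hk1 : u k * v = 1 := by linarith
    rw [hTdef]
    exact Finset.mem_image.mpr ⟨k, Finset.mem_univ k, (eq_inv_of_mul_eq_one_right hk1).symm⟩
  set xn : ℕ → ℝ := fun i => if h : i < r then xs ⟨i, h⟩ else 0 with hxndef
  obtain ⟨a0, ha0T, ha0lt⟩ : ∃ a, a ∉ T ∧ a < xn 0 := by
    obtain ⟨a, ha⟩ := ((Set.Iio_infinite (xn 0)).diff T.finite_toSet).nonempty
    exact ⟨a, ha.2, ha.1⟩
  obtain ⟨ar, harT, harlt⟩ : ∃ a, a ∉ T ∧ xn (r - 1) < a := by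
    obtain ⟨a, ha⟩ := ((Set.Ioi_infinite (xn (r - 1))).diff T.finite_toSet).nonempty
    exact ⟨a, ha.2, ha.1⟩
  have hxnlt : ∀ i j : ℕ, i < j → ∀ hj : j < r, xn i < xn j := by
    intro i j hij hj
    simp only [hxndef]
    rw [dif_pos (by omega : i < r), dif_pos hj]
    exact hxs_mono _ _ (Fin.mk_lt_mk.mpr hij)
  have hmid : ∀ i : ℕ, ∃ a, a ∉ T ∧ (i + 1 < r → xn i < a ∧ a < xn (i + 1)) := by
    intro i
    by_cases h : i + 1 < r
    · have hlt : xn i < xn (i + 1) := hxnlt i (i + 1) (by omega) h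
      obtain ⟨a, ha⟩ := ((Set.Ioo_infinite hlt).diff T.finite_toSet).nonempty
      exact ⟨a, ha.2, fun _ => ⟨ha.1.1, ha.1.2⟩⟩
    · exact ⟨a0, ha0T, fun hh => absurd hh h⟩
  choose am hamT ham using hmid
  set a : ℕ → ℝ := fun i => if i = 0 then a0 else if i = r then ar else am (i - 1) with hadef
  have haT : ∀ i, a i ∉ T := by
    intro i
    simp only [hadef]
    split_ifs
    exacts [ha0T, harT, hamT _]
  have ha_lt_x : ∀ i, i < r → a i < xn i := by
    intro i hi
    by_cases h0 : i = 0
    · subst h0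
      simp only [hadef]
      simpa using ha0lt
    · have hir : i ≠ r := by omega
      simp only [hadef]
      rw [if_neg h0, if_neg hir]
      have h3 := ham (i - 1) (by omega)
      rw [show i - 1 + 1 = i from by omega] at h3
      exact h3.2
  have hx_lt_a : ∀ i, i < r → xn i < a (i + 1) := by
    intro i hi
    by_cases h : i + 1 = r
    · simp only [hadef]
      rw [if_neg (by omega), if_pos h]
      rw [show i = r - 1 from by omega]
      exact harlt
    · simp only [hadef]
      rw [if_neg (by omega), if_neg h]
      rw [Nat.add_sub_cancel]
      exact (ham i (by omega)).1
  have hPa : ∀ i : ℕ, eval (a i) P ≠ 0 := fun i h => haT i (hProotT _ h)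
  set bnd : ℕ → ℝ := fun i => (eval (a i) P) ^ 2 / (|Gval P Q (a i)| + 1) with hbnd
  have hbndpos : ∀ i, 0 < bnd i := fun i =>
    div_pos (pow_two_pos_of_ne_zero (hPa i)) (by positivity)
  have hne : (Finset.range (r + 1)).Nonempty := Finset.nonempty_range_iff.mpr (by omega)
  refine ⟨(Finset.range (r + 1)).inf' hne bnd, ?_, ?_⟩
  · exact (Finset.lt_inf'_iff hne).mpr fun i _ => hbndpos i
  intro t ht htlt
  have hpos_a : ∀ i, i ≤ r → 0 < eval (a i) (chiT P Q t) := by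
    intro i hi
    refine chi_pos_at P Q (a i) (hPa i) t ht ?_
    exact lt_of_lt_of_le htlt (Finset.inf'_le bnd (Finset.mem_range.mpr (by omega)))
  have hneg_x : ∀ i, i < r → eval (xn i) (chiT P Q t) < 0 := by
    intro i hi
    simp only [hxndef]
    rw [dif_pos hi]
    exact hneg _ (hxs_memT _) t ht
  have hchine : chiT P Q t ≠ 0 := by
    intro h0
    have h1 := hneg_x 0 (by omega)
    rw [h0] at h1
    simp at h1
  rcases eq_or_lt_of_le hc₀ with hc0 | hc0
  · -- c₀ = 0
    set y : ℕ → ℝ := fun i => if i % 2 = 0 then a (i / 2) else xn (i / 2) with hydef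
    have hya : ∀ m : ℕ, y (2 * m) = a m := by
      intro m; simp only [hydef]; rw [if_pos (by omega)]; congr 1; omega
    have hyx : ∀ m : ℕ, y (2 * m + 1) = xn m := by
      intro m; simp only [hydef]; rw [if_neg (by omega)]; congr 1; omega
    have hcard : 2 * r ≤ Multiset.card (chiT P Q t).roots := by
      apply card_roots_ge (chiT P Q t) (2 * r) y
      · intro i hi
        rcases Nat.even_or_odd i with ⟨m, hm⟩ | ⟨m, hm⟩
        · rw [show i = 2 * m from by omega, hya, hyx]
          exact ha_lt_x m (by omega)
        · rw [hm, hyx, show 2 * m + 1 + 1 = 2 * (m + 1) from by omega, hya]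
          exact hx_lt_a m (by omega)
      · intro i hi
        rcases Nat.even_or_odd i with ⟨m, hm⟩ | ⟨m, hm⟩
        · rw [show i = 2 * m from by omega, hya, hyx]
          exact mul_neg_of_pos_of_neg (hpos_a m (by omega)) (hneg_x m (by omega))
        · rw [hm, hyx, show 2 * m + 1 + 1 = 2 * (m + 1) from by omega, hya]
          exact mul_neg_of_neg_of_pos (hneg_x m (by omega)) (hpos_a (m + 1) (by omega))
    apply realRooted_of_card _ ?_ hchine
    have hdeg : (chiT P Q t).natDegree ≤ r + r :=
      natDegree_chiT_le P Q t r r hr le_rfl (by rw [hPdef]; exact natDegree_Pp_le u)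
        (by rw [hPdef, hQdef]; exact natDegree_QsubP_le' c₀ c u hr hc0.symm)
    exact le_trans hdeg (le_trans (by omega) hcard)
  · -- c₀ > 0
    have hLne : (∏ k : Fin r, -(u k)) ≠ 0 :=
      Finset.prod_ne_zero_iff.mpr fun k _ => neg_ne_zero.mpr (hu k)
    have hcoeff : (chiT P Q t).coeff (r + (r + 2)) = -(t * c₀ * (∏ k : Fin r, -(u k)) ^ 2) := by
      rw [hPdef, hQdef]; exact chi_coeff_top c₀ c u hr hu t
    have hcpos : 0 < t * c₀ * (∏ k : Fin r, -(u k)) ^ 2 :=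
      mul_pos (mul_pos ht hc0) (pow_two_pos_of_ne_zero hLne)
    have hdeg_le : (chiT P Q t).natDegree ≤ r + (r + 2) :=
      natDegree_chiT_le P Q t r (r + 2) hr (by omega) (by rw [hPdef]; exact natDegree_Pp_le u)
        (by rw [hPdef, hQdef]; exact natDegree_QsubP_le c₀ c u hr)
    have hdeg : (chiT P Q t).natDegree = r + (r + 2) :=
      natDegree_eq_of_le_of_coeff_ne_zero hdeg_le
        (by rw [hcoeff]; exact neg_ne_zero.mpr hcpos.ne')
    have hlc : (chiT P Q t).leadingCoeff < 0 := by
      rw [leadingCoeff, hdeg, hcoeff]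
      exact neg_lt_zero.mpr hcpos
    obtain ⟨Rp, hRp1, hRp2⟩ :=
      exists_eval_neg_right (chiT P Q t) (by rw [hdeg]; omega) hlc (a r)
    obtain ⟨Lp, hLp1, hLp2⟩ :=
      exists_eval_neg_left (chiT P Q t) (by rw [hdeg]; omega)
        (by rw [hdeg]; exact ⟨r + 1, by omega⟩) hlc (a 0)
    set y : ℕ → ℝ := fun i => if i = 0 then Lp else if i = 2 * r + 2 then Rp
      else if i % 2 = 1 then a ((i - 1) / 2) else xn ((i - 2) / 2) with hydef
    have hyL : y 0 = Lp := by simp [hydef]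
    have hyR : y (2 * r + 2) = Rp := by
      simp only [hydef]
      rw [if_neg (show ¬(2 * r + 2 = 0) from by omega)]
      simp
    have hya : ∀ m : ℕ, m ≤ r → y (2 * m + 1) = a m := by
      intro m hm
      simp only [hydef]
      rw [if_neg (by omega), if_neg (by omega), if_pos (by omega)]
      congr 1; omega
    have hyx : ∀ m : ℕ, m < r → y (2 * m + 2) = xn m := by
      intro m hm
      simp only [hydef]
      rw [if_neg (by omega), if_neg (by omega), if_neg (by omega)]
      congr 1; omega
    have hcard : 2 * r + 2 ≤ Multiset.card (chiT P Q t).roots := by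
      apply card_roots_ge (chiT P Q t) (2 * r + 2) y
      · intro i hi
        rcases Nat.even_or_odd i with ⟨m, hm⟩ | ⟨m, hm⟩
        · rcases Nat.eq_zero_or_pos m with rfl | hmpos
          · rw [show i = 0 from by omega, hyL, show (0 : ℕ) + 1 = 2 * 0 + 1 from by omega,
              hya 0 (by omega)]
            exact hLp1
          · rw [show i = 2 * (m - 1) + 2 from by omega, hyx (m - 1) (by omega),
              show 2 * (m - 1) + 2 + 1 = 2 * m + 1 from by omega, hya m (by omega)]
            have h5 := hx_lt_a (m - 1) (by omega)
            rw [show m - 1 + 1 = m from by omega] at h5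
            exact h5
        · rcases eq_or_lt_of_le (show m ≤ r from by omega) with hmr | hmr
          · rw [hm, hmr, hya r le_rfl, show 2 * r + 1 + 1 = 2 * r + 2 from by omega, hyR]
            exact hRp1
          · rw [hm, hya m (by omega), show 2 * m + 1 + 1 = 2 * m + 2 from by omega, hyx m hmr]
            exact ha_lt_x m hmr
      · intro i hi
        rcases Nat.even_or_odd i with ⟨m, hm⟩ | ⟨m, hm⟩
        · rcases Nat.eq_zero_or_pos m with rfl | hmpos
          · rw [show i = 0 from by omega, hyL, show (0 : ℕ) + 1 = 2 * 0 + 1 from by omega,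
              hya 0 (by omega)]
            exact mul_neg_of_neg_of_pos hLp2 (hpos_a 0 (by omega))
          · rw [show i = 2 * (m - 1) + 2 from by omega, hyx (m - 1) (by omega),
              show 2 * (m - 1) + 2 + 1 = 2 * m + 1 from by omega, hya m (by omega)]
            exact mul_neg_of_neg_of_pos (hneg_x (m - 1) (by omega)) (hpos_a m (by omega))
        · rcases eq_or_lt_of_le (show m ≤ r from by omega) with hmr | hmr
          · rw [hm, hmr, hya r le_rfl, show 2 * r + 1 + 1 = 2 * r + 2 from by omega, hyR]
            exact mul_neg_of_pos_of_neg (hpos_a r le_rfl) hRp2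
          · rw [hm, hya m (by omega), show 2 * m + 1 + 1 = 2 * m + 2 from by omega, hyx m hmr]
            exact mul_neg_of_pos_of_neg (hpos_a m (by omega)) (hneg_x m hmr)
    apply realRooted_of_card _ ?_ hchine
    rw [hdeg]
    exact le_trans (by omega) hcard
end
end

section
/- Let b > 0 and c, d ∈ ℝ, set R(w)=bw²+cw³+dw⁴ and F(w)=w/(1+R(w)) ∈ 𝓕 (numerator P=1, denominator Q=1+R), so that χ_F(w)=1−bw²−2cw³−3dw⁴. Then χ_F has a multiple real root if and only if there exists v ∈ ℝ∖{0} with c=v(b−2v²) and d=v²(b−3v²)/3. In that case χ_F(w)=(1+vw)²·(1−2vw+3v²w²−bw²), and every complex root of χ_F is real (F ∈ 𝓕_rr⁰) if and only if 2v² ≤ b. -/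
open Polynomial MeasureTheory

noncomputable section

lemma chi_eq (b c d : ℝ) :
    charPoly 1 (1 + C b * X ^ 2 + C c * X ^ 3 + C d * X ^ 4)
      = C 1 - C b * X ^ 2 - C (2*c) * X ^ 3 - C (3*d) * X ^ 4 := by
  unfold charPoly
  simp only [derivative_one, derivative_add, derivative_mul, derivative_C, derivative_X_pow,
    map_mul, map_ofNat, Nat.cast_ofNat, C_1]
  ring

lemma chi_eval (b c d x : ℝ) :
    (charPoly 1 (1 + C b * X ^ 2 + C c * X ^ 3 + C d * X ^ 4)).eval x
      = 1 - b * x ^ 2 - 2*c * x ^ 3 - 3*d * x ^ 4 := by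
  rw [chi_eq]; simp

lemma chi_deriv_eval (b c d x : ℝ) :
    (derivative (charPoly 1 (1 + C b * X ^ 2 + C c * X ^ 3 + C d * X ^ 4))).eval x
      = - 2*b*x - 6*c * x ^ 2 - 12*d * x ^ 3 := by
  rw [chi_eq]
  simp only [derivative_sub, derivative_one, derivative_mul, derivative_C, derivative_X_pow,
    map_ofNat, Nat.cast_ofNat, C_1, derivative_C_mul]
  simp
  ring

lemma chi_aeval (b c d : ℝ) (z : ℂ) :
    Polynomial.aeval z (charPoly 1 (1 + C b * X ^ 2 + C c * X ^ 3 + C d * X ^ 4))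
      = 1 - (b:ℂ) * z ^ 2 - 2*(c:ℂ) * z ^ 3 - 3*(d:ℂ) * z ^ 4 := by
  rw [chi_eq]
  simp

/-- for `R(w) = bw² + cw³ + dw⁴` with `b > 0` and `F = w/(1+R)`, so that
`χ_F = 1 − bw² − 2cw³ − 3dw⁴`: `χ_F` has a multiple real root iff `c = v(b−2v²)` and
`d = v²(b−3v²)/3` for some `v ≠ 0`; in that case
`χ_F = (1+vw)²(1−2vw+3v²w²−bw²)`, and `χ_F` is real-rooted iff `2v² ≤ b`. -/
theorem stmt17 (b c d : ℝ) (hb : 0 < b) :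
    ((∃ x : ℝ,
        (charPoly 1 (1 + Polynomial.C b * X ^ 2 + Polynomial.C c * X ^ 3
          + Polynomial.C d * X ^ 4)).eval x = 0 ∧
        (derivative (charPoly 1 (1 + Polynomial.C b * X ^ 2 + Polynomial.C c * X ^ 3
          + Polynomial.C d * X ^ 4))).eval x = 0) ↔
      (∃ v : ℝ, v ≠ 0 ∧ c = v * (b - 2 * v ^ 2) ∧ d = v ^ 2 * (b - 3 * v ^ 2) / 3)) ∧
    (∀ v : ℝ, v ≠ 0 → c = v * (b - 2 * v ^ 2) → d = v ^ 2 * (b - 3 * v ^ 2) / 3 →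
      charPoly 1 (1 + Polynomial.C b * X ^ 2 + Polynomial.C c * X ^ 3
          + Polynomial.C d * X ^ 4)
        = (1 + Polynomial.C v * X) ^ 2 *
            (1 - Polynomial.C (2 * v) * X + Polynomial.C (3 * v ^ 2) * X ^ 2
              - Polynomial.C b * X ^ 2) ∧
      (RealRooted (charPoly 1 (1 + Polynomial.C b * X ^ 2 + Polynomial.C c * X ^ 3
          + Polynomial.C d * X ^ 4)) ↔ 2 * v ^ 2 ≤ b)) := by
  constructor
  · constructor
    · rintro ⟨x, h1, h2⟩
      rw [chi_eval] at h1
      rw [chi_deriv_eval] at h2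
      have hx : x ≠ 0 := by rintro rfl; norm_num at h1
      have hc : c * x ^ 3 + b * x ^ 2 - 2 = 0 := by linear_combination (-2)*h1 + (x/2)*h2
      have hd : 3*d*x^4 - b*x^2 + 3 = 0 := by linear_combination h1 - (x/2)*h2 - hc
      refine ⟨-x⁻¹, neg_ne_zero.mpr (inv_ne_zero hx), ?_, ?_⟩
      · field_simp
        linear_combination hc
      · field_simp
        linear_combination hd
    · rintro ⟨v, hv, hcc, hdd⟩
      subst hcc hdd
      refine ⟨-v⁻¹, ?_, ?_⟩
      · rw [chi_eval]; field_simp; ring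
      · rw [chi_deriv_eval]; field_simp; ring
  · intro v hv hcc hdd
    have hd3 : (3:ℝ)*d = v^2*(b-3*v^2) := by rw [hdd]; ring
    have hfact : charPoly 1 (1 + Polynomial.C b * X ^ 2 + Polynomial.C c * X ^ 3
          + Polynomial.C d * X ^ 4)
        = (1 + Polynomial.C v * X) ^ 2 *
            (1 - Polynomial.C (2 * v) * X + Polynomial.C (3 * v ^ 2) * X ^ 2
              - Polynomial.C b * X ^ 2) := by
      rw [chi_eq, hcc, hd3]
      simp only [map_mul, map_sub, map_add, map_pow, map_one, map_ofNat, C_1]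
      ring
    refine ⟨hfact, ?_, ?_⟩
    · -- RealRooted → 2v² ≤ b
      intro hrr
      by_contra hlt
      push_neg at hlt
      have hv2 : 0 < v^2 := by positivity
      have hA0 : 0 < 3*v^2 - b := by nlinarith
      set s : ℝ := Real.sqrt (2*v^2 - b) with hsdef
      have hs : s^2 = 2*v^2 - b := Real.sq_sqrt (by linarith)
      have hs0 : 0 < s := Real.sqrt_pos.mpr (by linarith)
      have hsC : (s:ℂ)^2 = 2*(v:ℂ)^2 - (b:ℂ) := by exact_mod_cast hs
      have haC : (3*(v:ℂ)^2 - (b:ℂ)) ≠ 0 := by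
        intro h
        have h' : ((3*v^2 - b : ℝ):ℂ) = 0 := by push_cast; exact h
        exact hA0.ne' (by exact_mod_cast h')
      obtain ⟨z, hAz⟩ : ∃ z : ℂ, (3*(v:ℂ)^2 - (b:ℂ))*z = (v:ℂ) + (s:ℂ)*Complex.I :=
        ⟨((v:ℂ) + (s:ℂ)*Complex.I)/(3*(v:ℂ)^2 - (b:ℂ)), by field_simp⟩
      have hnum : ((v:ℂ) + (s:ℂ)*Complex.I)^2 - 2*(v:ℂ)*((v:ℂ) + (s:ℂ)*Complex.I)
          + (3*(v:ℂ)^2 - (b:ℂ)) = 0 := by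
        linear_combination ((s:ℂ)^2)*Complex.I_sq - hsC
      have h0 : (3*(v:ℂ)^2 - (b:ℂ))^2 * ((1:ℂ) - 2*(v:ℂ)*z + (3*(v:ℂ)^2 - (b:ℂ))*z^2) = 0 := by
        linear_combination (3*(v:ℂ)^2 - (b:ℂ))*hnum
          + ((3*(v:ℂ)^2 - (b:ℂ))*((3*(v:ℂ)^2 - (b:ℂ))*z + ((v:ℂ) + (s:ℂ)*Complex.I))
              - 2*(v:ℂ)*(3*(v:ℂ)^2 - (b:ℂ)))*hAz
      have hfac : (1:ℂ) - 2*(v:ℂ)*z + (3*(v:ℂ)^2 - (b:ℂ))*z^2 = 0 :=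
        (mul_eq_zero.mp h0).resolve_left (pow_ne_zero _ haC)
      have hroot : Polynomial.aeval z (charPoly 1 (1 + Polynomial.C b * X ^ 2
          + Polynomial.C c * X ^ 3 + Polynomial.C d * X ^ 4)) = 0 := by
        rw [chi_aeval, hcc, hdd]
        push_cast
        linear_combination (1+(v:ℂ)*z)^2 * hfac
      have h0im := hrr z hroot
      have him := congrArg Complex.im hAz
      simp [Complex.mul_im, Complex.add_im, pow_two, Complex.ofReal_re, Complex.ofReal_im, h0im] at him
      exact hs0.ne' him.symm
    · -- 2v² ≤ b → RealRooted
      intro hle z hzr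
      rw [chi_aeval, hcc, hdd] at hzr
      push_cast at hzr
      have hfac : ((1:ℂ) + v*z)^2 * (1 - 2*(v:ℂ)*z + (3*(v:ℂ)^2 - b)*z^2) = 0 := by
        linear_combination hzr
      rcases mul_eq_zero.mp hfac with h | h
      · have h1 : (1:ℂ) + v*z = 0 := by
          have := pow_eq_zero_iff (n := 2) (by norm_num) |>.mp h
          exact this
        have := congrArg Complex.im h1
        simp at this
        rcases this with h' | h'
        · exact absurd h' hv
        · exact h'
      · obtain ⟨x, hx⟩ : ∃ x : ℝ, x = z.re := ⟨_, rfl⟩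
        obtain ⟨y, hy⟩ : ∃ y : ℝ, y = z.im := ⟨_, rfl⟩
        rw [show z = (x:ℂ) + (y:ℂ)*Complex.I by rw [hx, hy]; exact (Complex.re_add_im z).symm] at h
        have hre := congrArg Complex.re h
        have him := congrArg Complex.im h
        simp [Complex.mul_re, Complex.mul_im, Complex.ofReal_re, Complex.ofReal_im, pow_two] at hre him
        rw [← hy]
        by_contra hyne
        have h3 : (3*v^2 - b) * x = v := by
          rcases mul_eq_zero.mp (show y * (2*((3*v^2 - b)*x - v)) = 0 by linear_combination him) with h' | h'
          · exact absurd h' hyne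
          · linarith
        have hkey : (3*v^2 - b)^2*y^2 = 2*v^2 - b := by
          linear_combination (-(3*v^2 - b))*hre + ((3*v^2 - b)*x - v)*h3
        have hAne : (3*v^2 - b) ≠ 0 := by
          intro h0
          rw [h0] at h3
          simp at h3
          exact hv h3.symm
        have hpos : 0 < (3*v^2 - b)^2*y^2 := by positivity
        nlinarith
end
end
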